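/- arXiv:2107.13262 — 4 statements merged into one kernel-verified Lean document; each statement's English description precedes it below -/
import Mathlib

section
/- Let 0 < λ ≤ Λ, β = (Λ/λ)(N−1)+1, and let u^δ(x) = C_δ(1+|x|²)^{-δ/2} with δ, C_δ > 0. Then for every x ∈ ℝ^N, the Pucci maximal operator satisfies M⁺_{λ,Λ}(D²u^δ(x)) ≥ C_δ δ λ (β−δ−2)/(1+|x|²)^{δ/2+1}. -/
/-!
The Hessian of `u = C (1 + |x|²)^q` is `a I + b x xᵀ` with `a = 2Cq (1 + |x|²)^(q-1)` and
`b = 4Cq(q-1) (1 + |x|²)^(q-2)`. Testing the supremum defining `M⁺` with the coefficient matrix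
`A = Λ I - (Λ - λ) x xᵀ / |x|²`, which acts as `λ` on `x` and as `Λ` on `x^⊥`, gives
`M⁺(D²u) ≥ -Λ (N-1) a - λ (a + b |x|²)`. For `q = -δ/2` this exceeds the claimed bound by
`C δ λ (δ + 2) (1 + |x|²)^(-δ/2-2) ≥ 0`.
-/

open Matrix Real Filter
open scoped RealInnerProductSpace

/-- Pucci maximal operator `M⁺_{λ,Λ}(M) = sup_{λI ≤ A ≤ ΛI} -Tr(A M)`. -/
noncomputable def pucciSup {N : ℕ} (lam Lam : ℝ) (M : Matrix (Fin N) (Fin N) ℝ) : ℝ :=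
  sSup {t : ℝ | ∃ A : Matrix (Fin N) (Fin N) ℝ, A.IsSymm ∧
    (A - lam • (1 : Matrix (Fin N) (Fin N) ℝ)).PosSemidef ∧
    (Lam • (1 : Matrix (Fin N) (Fin N) ℝ) - A).PosSemidef ∧
    t = -(A * M).trace}

/-- Pucci minimal operator `M⁻_{λ,Λ}(M) = inf_{λI ≤ A ≤ ΛI} -Tr(A M)`. -/
noncomputable def pucciInf {N : ℕ} (lam Lam : ℝ) (M : Matrix (Fin N) (Fin N) ℝ) : ℝ :=
  sInf {t : ℝ | ∃ A : Matrix (Fin N) (Fin N) ℝ, A.IsSymm ∧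
    (A - lam • (1 : Matrix (Fin N) (Fin N) ℝ)).PosSemidef ∧
    (Lam • (1 : Matrix (Fin N) (Fin N) ℝ) - A).PosSemidef ∧
    t = -(A * M).trace}

/-- Hessian matrix of `u : ℝ^N → ℝ` at `x`. -/
noncomputable def hess {N : ℕ} (u : EuclideanSpace ℝ (Fin N) → ℝ)
    (x : EuclideanSpace ℝ (Fin N)) : Matrix (Fin N) (Fin N) ℝ :=
  fun i j => iteratedFDeriv ℝ 2 u x ![EuclideanSpace.single i 1, EuclideanSpace.single j 1]

section Hessian

variable {E : Type*} [NormedAddCommGroup E] [InnerProductSpace ℝ E]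

theorem hasFDerivAt_mul_one_add_norm_sq_rpow (c q : ℝ) (y : E) :
    HasFDerivAt (fun z : E => c * (1 + ‖z‖ ^ 2) ^ q)
      ((2 * c * q * (1 + ‖y‖ ^ 2) ^ (q - 1)) • innerSL ℝ y) y := by
  have hpos : 0 < 1 + ‖y‖ ^ 2 := by positivity
  have hsq : HasFDerivAt (fun z : E => 1 + ‖z‖ ^ 2) (2 • innerSL ℝ y) y := by
    simpa using ((hasFDerivAt_id y).norm_sq).const_add 1
  have hrpow := Real.hasDerivAt_rpow_const (x := 1 + ‖y‖ ^ 2) (p := q) (Or.inl hpos.ne')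
  refine ((hrpow.comp_hasFDerivAt y hsq).const_mul c).congr_fderiv ?_
  ext v
  simp only [FunLike.coe_smul, Pi.smul_apply, smul_eq_mul, innerSL_apply_apply]
  rw [nsmul_eq_mul]
  push_cast
  ring

theorem fderiv_mul_one_add_norm_sq_rpow (c q : ℝ) :
    fderiv ℝ (fun z : E => c * (1 + ‖z‖ ^ 2) ^ q) =
      fun y => (2 * c * q * (1 + ‖y‖ ^ 2) ^ (q - 1)) • innerSL ℝ y :=
  funext fun y => (hasFDerivAt_mul_one_add_norm_sq_rpow c q y).fderiv

theorem fderiv_fderiv_mul_one_add_norm_sq_rpow_apply (c q : ℝ) (x v w : E) :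
    fderiv ℝ (fderiv ℝ (fun z : E => c * (1 + ‖z‖ ^ 2) ^ q)) x v w =
      4 * c * q * (q - 1) * (1 + ‖x‖ ^ 2) ^ (q - 2) * (⟪x, v⟫ * ⟪x, w⟫) +
        2 * c * q * (1 + ‖x‖ ^ 2) ^ (q - 1) * ⟪v, w⟫ := by
  have hcoef := hasFDerivAt_mul_one_add_norm_sq_rpow (2 * c * q) (q - 1) x
  have hD : HasFDerivAt (fun y : E => (2 * c * q * (1 + ‖y‖ ^ 2) ^ (q - 1)) • innerSL ℝ y) _ x :=
    hcoef.smul (innerSL ℝ (E := E)).hasFDerivAt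
  rw [fderiv_mul_one_add_norm_sq_rpow, hD.fderiv]
  simp only [show q - 1 - 1 = q - 2 by ring, _root_.add_apply, _root_.smul_apply,
    ContinuousLinearMap.smulRight_apply, innerSL_apply_apply, smul_eq_mul]
  erw [innerSL_apply_apply]
  ring

end Hessian

theorem hess_mul_one_add_norm_sq_rpow {N : ℕ} (c q : ℝ) (x : EuclideanSpace ℝ (Fin N)) :
    hess (fun y => c * (1 + ‖y‖ ^ 2) ^ q) x =
      (2 * c * q * (1 + ‖x‖ ^ 2) ^ (q - 1)) • (1 : Matrix (Fin N) (Fin N) ℝ) +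
        (4 * c * q * (q - 1) * (1 + ‖x‖ ^ 2) ^ (q - 2)) • vecMulVec x x := by
  ext i j
  simp only [hess, iteratedFDeriv_two_apply, Fin.isValue, cons_val_zero, cons_val_one,
    cons_val_fin_one, fderiv_fderiv_mul_one_add_norm_sq_rpow_apply,
    EuclideanSpace.inner_single_right, ringHom_apply, one_mul, PiLp.single_apply, eq_comm (a := j),
    MonoidWithZeroHom.map_ite_one_zero, mul_ite, mul_one, mul_zero, Matrix.add_apply,
    Matrix.smul_apply, Matrix.one_apply, smul_eq_mul, vecMulVec_apply]
  ring

theorem dotProduct_mul_dotProduct_le {n : Type*} [Fintype n] (v w : n → ℝ) :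
    (v ⬝ᵥ w) * (v ⬝ᵥ w) ≤ (v ⬝ᵥ v) * (w ⬝ᵥ w) := by
  have := real_inner_mul_inner_self_le (WithLp.toLp 2 v) (WithLp.toLp 2 w)
  simp only [EuclideanSpace.inner_toLp_toLp, star_trivial] at this
  rwa [dotProduct_comm w v] at this

namespace Matrix

variable {n : Type*} [Fintype n] [DecidableEq n]

theorem PosSemidef.two_mul_abs_apply_le {A : Matrix n n ℝ} (hA : A.PosSemidef) (i j : n) :
    2 * |A i j| ≤ A i i + A j j := by
  have hform (c : ℝ) : 0 ≤ A i i + 2 * c * A i j + c ^ 2 * A j j := by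
    have := hA.dotProduct_mulVec_nonneg (Pi.single i 1 + c • Pi.single j 1)
    have hsymm : A j i = A i j := by simpa using hA.1.apply i j
    simp only [star_trivial, mulVec_add, mulVec_single, MulOpposite.op_one, one_smul, mulVec_smul,
      dotProduct_add, add_dotProduct, single_dotProduct, col_apply, one_mul, smul_dotProduct, hsymm,
      smul_eq_mul, dotProduct_smul] at this
    linear_combination this
  have hplus := hform 1
  have hminus := hform (-1)
  norm_num at hplus hminus
  rcases abs_cases (A i j) with ⟨h, _⟩ | ⟨h, _⟩ <;> rw [h] <;> linarith

theorem posSemidef_smul_one_sub_smul_vecMulVec {k : ℝ} (hk : 0 ≤ k) (v : n → ℝ) :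
    (k • 1 - (k / (v ⬝ᵥ v)) • vecMulVec v v).PosSemidef := by
  have hV : (vecMulVec v v).PosSemidef := by simpa using posSemidef_vecMulVec_self_star v
  refine .of_dotProduct_mulVec_nonneg
    ((isHermitian_one.smul (.all k)).sub (hV.1.smul (.all _))) fun w => ?_
  have hcs := dotProduct_mul_dotProduct_le v w
  have hww : 0 ≤ w ⬝ᵥ w := by simpa using dotProduct_self_star_nonneg w
  simp only [star_trivial, sub_mulVec, smul_mulVec, one_mulVec, vecMulVec_mulVec, dotProduct_sub,
    dotProduct_smul, op_smul_eq_mul, smul_eq_mul, sub_nonneg]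
  rcases (dotProduct_self_star_nonneg v).eq_or_lt with hv0 | hv_pos
  · simp only [star_trivial] at hv0
    simp [← hv0, mul_nonneg hk hww]
  · simp only [star_trivial] at hv_pos
    calc k / (v ⬝ᵥ v) * (w ⬝ᵥ v * v ⬝ᵥ w) ≤ k / (v ⬝ᵥ v) * (v ⬝ᵥ v * w ⬝ᵥ w) := by
          rw [dotProduct_comm w v]; gcongr
      _ = k * w ⬝ᵥ w := by field_simp

theorem abs_apply_le_of_posSemidef_sub {lam Lam : ℝ} (hlam : 0 ≤ lam) {A : Matrix n n ℝ}
    (h1 : (A - lam • 1).PosSemidef) (h2 : (Lam • 1 - A).PosSemidef) (i j : n) :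
    |A i j| ≤ Lam := by
  have hA : A.PosSemidef := by simpa using h1.add (PosSemidef.one.smul hlam)
  have hdiag (k : n) : A k k ≤ Lam := by simpa using h2.diag_nonneg (i := k)
  linarith [hA.two_mul_abs_apply_le i j, hdiag i, hdiag j]

end Matrix

section Pucci

variable {N : ℕ} {lam Lam : ℝ}

theorem neg_trace_mul_le_pucciSup (hlam : 0 ≤ lam) {A : Matrix (Fin N) (Fin N) ℝ} (hA : A.IsSymm)
    (h1 : (A - lam • 1).PosSemidef) (h2 : (Lam • 1 - A).PosSemidef)
    (M : Matrix (Fin N) (Fin N) ℝ) : -(A * M).trace ≤ pucciSup lam Lam M := by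
  refine le_csSup ⟨∑ i, ∑ j, Lam * |M j i|, ?_⟩ ⟨A, hA, h1, h2, rfl⟩
  rintro _ ⟨B, -, hB1, hB2, rfl⟩
  simp only [trace, diag_apply, mul_apply, ← Finset.sum_neg_distrib]
  gcongr with i _ j _
  calc -(B i j * M j i) ≤ |B i j| * |M j i| := abs_mul (B i j) (M j i) ▸ neg_le_abs _
    _ ≤ Lam * |M j i| := by gcongr; exact abs_apply_le_of_posSemidef_sub hlam hB1 hB2 i j

theorem le_pucciSup_smul_one_add_smul_vecMulVec (hlam : 0 ≤ lam) (hle : lam ≤ Lam) {a : ℝ}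
    (ha : a ≤ 0) (b : ℝ) (v : Fin N → ℝ) :
    -(Lam * (N - 1) * a) - lam * (a + b * (v ⬝ᵥ v)) ≤
      pucciSup lam Lam (a • 1 + b • vecMulVec v v) := by
  set s := v ⬝ᵥ v
  set V := vecMulVec v v
  have hs : 0 ≤ s := by simpa using dotProduct_self_star_nonneg v
  have hk : 0 ≤ Lam - lam := sub_nonneg.mpr hle
  have hV : V.PosSemidef := by simpa using posSemidef_vecMulVec_self_star v
  -- At `v = 0` the junk value `(Λ - λ) / 0 = 0` makes `A = Λ I`; `a ≤ 0` covers that case.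
  set A : Matrix (Fin N) (Fin N) ℝ := Lam • 1 - ((Lam - lam) / s) • V
  have hA : A.IsSymm := by
    simp [A, V, IsSymm, transpose_sub, transpose_smul, transpose_vecMulVec]
  have h1 : (A - lam • 1).PosSemidef := by
    convert posSemidef_smul_one_sub_smul_vecMulVec hk v using 1
    simp only [A]
    module
  have h2 : (Lam • 1 - A).PosSemidef := by
    simpa [A] using hV.smul (div_nonneg hk hs)
  have hVV : V * V = s • V := by
    simp only [V, s, vecMulVec_mul_vecMulVec, vecMulVec_smul]
  have htrace : (A * (a • 1 + b • V)).trace =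
      Lam * a * N + Lam * b * s - (Lam - lam) / s * a * s - (Lam - lam) / s * b * s * s := by
    simp only [A, sub_mul, mul_add, smul_mul_smul_comm, one_mul, mul_one, hVV, smul_smul,
      trace_sub, trace_add, trace_smul, trace_one, trace_vecMulVec, V, s, smul_eq_mul,
      Fintype.card_fin]
    ring
  refine le_trans ?_ (neg_trace_mul_le_pucciSup hlam hA h1 h2 _)
  rw [htrace]
  rcases hs.eq_or_lt with hs0 | hs_pos
  · rw [← hs0]
    simp only [div_zero, zero_mul, sub_zero, mul_zero, add_zero]
    linarith [mul_nonpos_of_nonneg_of_nonpos hk ha]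
  · field_simp
    exact le_of_eq (by ring)

end Pucci

/-- for `u^δ(x) = C_δ(1+|x|²)^{-δ/2}` one has
`M⁺_{λ,Λ}(D²u^δ(x)) ≥ C_δ δ λ (β−δ−2)/(1+|x|²)^{δ/2+1}`, where `β = (Λ/λ)(N−1)+1`. -/
theorem stmt1 {N : ℕ} (lam Lam β δ C : ℝ) (hlam : 0 < lam) (hle : lam ≤ Lam)
    (hβ : β = Lam / lam * (N - 1) + 1) (hδ : 0 < δ) (hC : 0 < C)
    (u : EuclideanSpace ℝ (Fin N) → ℝ)
    (hu : ∀ x : EuclideanSpace ℝ (Fin N), u x = C * (1 + ‖x‖ ^ 2) ^ (-(δ / 2))) :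
    ∀ x : EuclideanSpace ℝ (Fin N),
      pucciSup lam Lam (hess u x) ≥
        C * δ * lam * (β - δ - 2) / (1 + ‖x‖ ^ 2) ^ (δ / 2 + 1) := by
  obtain rfl : u = fun x => C * (1 + ‖x‖ ^ 2) ^ (-(δ / 2)) := funext hu
  intro x
  have hnorm : ‖x‖ ^ 2 = x ⬝ᵥ x := by
    rw [← real_inner_self_eq_norm_sq, EuclideanSpace.inner_eq_star_dotProduct, star_trivial]
  have hpos : 0 < 1 + ‖x‖ ^ 2 := by positivity
  set t := (1 + ‖x‖ ^ 2) ^ (-(δ / 2) - 2)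
  have hpow : (1 + ‖x‖ ^ 2) ^ (-(δ / 2) - 1) = t * (1 + ‖x‖ ^ 2) := by
    rw [← rpow_add_one hpos.ne']; ring_nf
  have hdenom : (1 + ‖x‖ ^ 2) ^ (δ / 2 + 1) = (t * (1 + ‖x‖ ^ 2))⁻¹ := by
    rw [← hpow, ← rpow_neg hpos.le]; ring_nf
  rw [hess_mul_one_add_norm_sq_rpow, ge_iff_le]
  refine le_trans ?_ (le_pucciSup_smul_one_add_smul_vecMulVec hlam.le hle ?_ _ _)
  · rw [hdenom, div_inv_eq_mul, hpow, ← hnorm]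
    have hβ' : lam * β = Lam * (N - 1) + lam := by rw [hβ]; field_simp
    have hgap : 0 ≤ C * δ * lam * (δ + 2) * t := by positivity
    linear_combination hgap + (C * δ * t * (1 + ‖x‖ ^ 2)) * hβ'
  · rw [hpow]
    have : 0 ≤ C * δ * (t * (1 + ‖x‖ ^ 2)) := by positivity
    linarith
end

section
/- Let N > 2, 0 < λ ≤ Λ, β = (Λ/λ)(N−1)+1 > 2, q ≥ 0, γ > 1 with (β−2)q + (β−1)γ > β. Then there exist δ ∈ (0, β−2) and C_δ > 0 such that v(x) = C_δ(1+|x|²)^{-δ/2} is a nonconstant, nonnegative classical solution of M⁺_{λ,Λ}(D²v(x)) ≥ v(x)^q |Dv(x)|^γ for all x ∈ ℝ^N. -/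
open Matrix Real Filter
open scoped RealInnerProductSpace

/-! ### Auxiliary lemmas -/

section Aux

/-- Entrywise bound on admissible matrices for the Pucci operator. -/
lemma pucci_entry_bound {N : ℕ} {lam Lam : ℝ} (hlam : 0 ≤ lam)
    {A : Matrix (Fin N) (Fin N) ℝ} (hA : A.IsSymm)
    (h1 : (A - lam • (1 : Matrix (Fin N) (Fin N) ℝ)).PosSemidef)
    (h2 : (Lam • (1 : Matrix (Fin N) (Fin N) ℝ) - A).PosSemidef) (i j : Fin N) :
    |A i j| ≤ Lam := by
  have q1 : ∀ w : Fin N → ℝ, lam * (w ⬝ᵥ w) ≤ w ⬝ᵥ A *ᵥ w := by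
    intro w
    have := h1.dotProduct_mulVec_nonneg w
    simp only [star_trivial, Matrix.sub_mulVec, dotProduct_sub, Matrix.smul_mulVec,
      Matrix.one_mulVec, dotProduct_smul, smul_eq_mul] at this
    linarith
  have q2 : ∀ w : Fin N → ℝ, w ⬝ᵥ A *ᵥ w ≤ Lam * (w ⬝ᵥ w) := by
    intro w
    have := h2.dotProduct_mulVec_nonneg w
    simp only [star_trivial, Matrix.sub_mulVec, dotProduct_sub, Matrix.smul_mulVec,
      Matrix.one_mulVec, dotProduct_smul, smul_eq_mul] at this
    linarith
  have hsym : A j i = A i j := by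
    have := congrFun (congrFun hA.symm i) j; simpa [Matrix.transpose_apply] using this.symm
  have two_form : ∀ c d : ℝ,
      ((Pi.single i c + Pi.single j d : Fin N → ℝ) ⬝ᵥ A *ᵥ (Pi.single i c + Pi.single j d))
      = c * (A i i * c) + c * (A i j * d) + (d * (A j i * c) + d * (A j j * d)) := by
    intro c d
    rw [Matrix.mulVec_add, Matrix.mulVec_single, Matrix.mulVec_single,
      add_dotProduct, single_dotProduct, single_dotProduct]
    simp [Pi.add_apply]; ring
  by_cases hij : i = j
  · subst hij
    have hii1 := q1 (Pi.single i 1)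
    have hii2 := q2 (Pi.single i 1)
    rw [Matrix.mulVec_single, single_dotProduct, single_dotProduct] at hii1 hii2
    simp at hii1 hii2
    rw [abs_le]; constructor <;> nlinarith
  · have dii1 := q1 (Pi.single i 1); have dii2 := q2 (Pi.single i 1)
    have djj1 := q1 (Pi.single j 1); have djj2 := q2 (Pi.single j 1)
    rw [Matrix.mulVec_single, single_dotProduct, single_dotProduct]
      at dii1 dii2 djj1 djj2
    simp at dii1 dii2 djj1 djj2
    have hp := q2 (Pi.single i 1 + Pi.single j 1)
    have hm := q2 (Pi.single i 1 + Pi.single j (-1))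
    rw [two_form] at hp hm
    have hdot : ∀ d : ℝ, ((Pi.single i 1 + Pi.single j d : Fin N → ℝ) ⬝ᵥ
        (Pi.single i 1 + Pi.single j d)) = 1 + d * d := by
      intro d
      rw [add_dotProduct, single_dotProduct, single_dotProduct]
      simp [Pi.single_apply, hij, Ne.symm hij]
    rw [hdot] at hp hm
    rw [abs_le]; constructor <;> nlinarith

/-- Any admissible value is at most the Pucci supremum. -/
lemma le_pucciSup {N : ℕ} {lam Lam : ℝ} (hlam : 0 ≤ lam)
    (M A : Matrix (Fin N) (Fin N) ℝ) (hA : A.IsSymm)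
    (h1 : (A - lam • (1 : Matrix (Fin N) (Fin N) ℝ)).PosSemidef)
    (h2 : (Lam • (1 : Matrix (Fin N) (Fin N) ℝ) - A).PosSemidef) :
    -(A * M).trace ≤ pucciSup lam Lam M := by
  apply le_csSup
  · refine ⟨∑ i, ∑ j, Lam * |M j i|, ?_⟩
    rintro t ⟨B, hB, hB1, hB2, rfl⟩
    have htr : (B * M).trace = ∑ i, ∑ j, B i j * M j i := by
      simp [Matrix.trace, Matrix.diag, Matrix.mul_apply]
    rw [htr, ← Finset.sum_neg_distrib]
    apply Finset.sum_le_sum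
    intro i _
    rw [← Finset.sum_neg_distrib]
    apply Finset.sum_le_sum
    intro j _
    calc -(B i j * M j i) ≤ |B i j * M j i| := neg_le_abs _
      _ = |B i j| * |M j i| := abs_mul _ _
      _ ≤ Lam * |M j i| := by
          apply mul_le_mul_of_nonneg_right (pucci_entry_bound hlam hB hB1 hB2 i j) (abs_nonneg _)
  · exact ⟨A, hA, h1, h2, rfl⟩

/-- Quadratic form of a matrix of the shape `a·I + b·x xᵀ`. -/
lemma quad_form {N : ℕ} (a b : ℝ) (x w : Fin N → ℝ) :
    w ⬝ᵥ (Matrix.of fun i j => (if i = j then a else 0) + b * (x i * x j)) *ᵥ w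
      = a * (∑ i, w i ^ 2) + b * (∑ i, x i * w i) ^ 2 := by
  have inner_eq : ∀ i, ((Matrix.of fun i j => (if i = j then a else 0) + b * (x i * x j)) *ᵥ w) i
      = a * w i + b * x i * (∑ j, x j * w j) := by
    intro i
    simp only [Matrix.mulVec, dotProduct, Matrix.of_apply, add_mul, Finset.sum_add_distrib]
    congr 1
    · simp [ite_mul]
    · rw [Finset.mul_sum]; congr 1; ext j; ring
  simp only [dotProduct, inner_eq]
  rw [Finset.sum_congr rfl (fun i _ => by ring :
    ∀ i ∈ Finset.univ, w i * (a * w i + b * x i * (∑ j, x j * w j))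
      = a * w i ^ 2 + b * (∑ j, x j * w j) * (x i * w i))]
  rw [Finset.sum_add_distrib, ← Finset.mul_sum, ← Finset.mul_sum]
  ring

/-- Trace of a product of two matrices of the shape `a·I + b·x xᵀ`. -/
lemma trace_form {N : ℕ} (a b p c : ℝ) (x : Fin N → ℝ) :
    ((Matrix.of fun i j => (if i = j then a else 0) + b * (x i * x j))
      * (Matrix.of fun i j => (if i = j then p else 0) + c * (x i * x j))).trace
    = a * p * N + (a * c + b * p) * (∑ i, x i ^ 2) + b * c * (∑ i, x i ^ 2) ^ 2 := by
  have diag_eq : ∀ i, ((Matrix.of fun i j => (if i = j then a else 0) + b * (x i * x j))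
      * (Matrix.of fun i j => (if i = j then p else 0) + c * (x i * x j))) i i
      = a * p + (a * c + b * p) * x i ^ 2 + b * c * x i ^ 2 * (∑ j, x j ^ 2) := by
    intro i
    simp only [Matrix.mul_apply, Matrix.of_apply]
    rw [Finset.sum_congr rfl (fun j _ => by ring :
      ∀ j ∈ Finset.univ, ((if i = j then a else 0) + b * (x i * x j)) *
          ((if j = i then p else 0) + c * (x j * x i))
        = ((if i = j then a else 0) * (if j = i then p else 0)
            + c * ((if i = j then a else 0) * (x j * x i)))
          + (b * (x i * ((if j = i then p else 0) * x j)) + (b * c * x i ^ 2) * x j ^ 2))]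
    rw [Finset.sum_add_distrib, Finset.sum_add_distrib, Finset.sum_add_distrib]
    rw [← Finset.mul_sum, ← Finset.mul_sum, ← Finset.mul_sum]
    simp [Finset.sum_ite_eq, Finset.sum_ite_eq', ite_mul, mul_ite]
    rw [← Finset.mul_sum]
    ring
  rw [Matrix.trace]
  simp only [Matrix.diag, diag_eq]
  rw [Finset.sum_add_distrib, Finset.sum_add_distrib, ← Finset.mul_sum, ← Finset.mul_sum,
    Finset.sum_const, Finset.card_univ, Fintype.card_fin]
  simp only [nsmul_eq_mul]
  rw [← Finset.sum_mul, ← Finset.mul_sum]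
  ring

/-- The matrix `Λ·I − ((Λ−λ)/|x|²)·x xᵀ` is admissible for the Pucci operator. -/
lemma A_admissible {N : ℕ} {lam Lam : ℝ} (hlam : 0 < lam) (hle : lam ≤ Lam) (x : Fin N → ℝ) :
    (Matrix.of fun i j => (if i = j then Lam else 0)
        + (-((Lam - lam) / (∑ k, x k ^ 2))) * (x i * x j)).IsSymm ∧
    ((Matrix.of fun i j => (if i = j then Lam else 0)
        + (-((Lam - lam) / (∑ k, x k ^ 2))) * (x i * x j))
      - lam • (1 : Matrix (Fin N) (Fin N) ℝ)).PosSemidef ∧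
    (Lam • (1 : Matrix (Fin N) (Fin N) ℝ)
      - (Matrix.of fun i j => (if i = j then Lam else 0)
        + (-((Lam - lam) / (∑ k, x k ^ 2))) * (x i * x j))).PosSemidef := by
  set r2 := ∑ k, x k ^ 2 with hr2
  have hr2nn : 0 ≤ r2 := Finset.sum_nonneg fun i _ => sq_nonneg _
  set b : ℝ := -((Lam - lam) / r2) with hb
  have cauchy : ∀ w : Fin N → ℝ, (∑ i, x i * w i) ^ 2 ≤ r2 * ∑ i, w i ^ 2 :=
    fun w => Finset.sum_mul_sq_le_sq_mul_sq _ _ _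
  have hxz : r2 = 0 → ∀ i, x i = 0 := by
    intro h i
    have := (Finset.sum_eq_zero_iff_of_nonneg
      (fun i _ => sq_nonneg (x i))).1 h i (Finset.mem_univ i)
    exact pow_eq_zero_iff (n := 2) (by norm_num) |>.1 this
  refine ⟨?_, ?_, ?_⟩
  · ext i j
    simp only [Matrix.transpose_apply, Matrix.of_apply]
    rw [if_congr (Iff.intro Eq.symm Eq.symm) rfl rfl]
    ring
  · have heq : (Matrix.of fun i j => (if i = j then Lam else 0) + b * (x i * x j))
        - lam • (1 : Matrix (Fin N) (Fin N) ℝ)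
        = Matrix.of fun i j => (if i = j then Lam - lam else 0) + b * (x i * x j) := by
      ext i j
      simp only [Matrix.sub_apply, Matrix.smul_apply, Matrix.one_apply, Matrix.of_apply,
        smul_eq_mul, mul_ite, mul_one, mul_zero]
      by_cases h : i = j <;> simp [h] <;> ring
    rw [heq]
    refine Matrix.PosSemidef.of_dotProduct_mulVec_nonneg ?_ ?_
    · ext i j
      simp only [Matrix.conjTranspose_apply, Matrix.of_apply, star_trivial]
      rw [if_congr (Iff.intro Eq.symm Eq.symm) rfl rfl]
      ring
    · intro w
      rw [star_trivial, quad_form]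
      rcases eq_or_lt_of_le hr2nn with h0 | hpos
      · have hx0 : ∀ i, x i = 0 := hxz h0.symm
        have hw : 0 ≤ ∑ i, w i ^ 2 := Finset.sum_nonneg fun i _ => sq_nonneg _
        simp only [hx0, zero_mul, Finset.sum_const_zero]
        nlinarith
      · have hdiv : 0 ≤ (Lam - lam) / r2 := div_nonneg (by linarith) hr2nn
        have expand : (Lam - lam) * (∑ i, w i ^ 2) + -((Lam - lam) / r2) * (∑ i, x i * w i) ^ 2
            = (Lam - lam) / r2 * (r2 * (∑ i, w i ^ 2) - (∑ i, x i * w i) ^ 2) := by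
          field_simp
          ring
        rw [hb, expand]
        exact mul_nonneg hdiv (by linarith [cauchy w])
  · have heq : Lam • (1 : Matrix (Fin N) (Fin N) ℝ)
        - (Matrix.of fun i j => (if i = j then Lam else 0) + b * (x i * x j))
        = Matrix.of fun i j => (if i = j then (0:ℝ) else 0) + (-b) * (x i * x j) := by
      ext i j
      simp only [Matrix.sub_apply, Matrix.smul_apply, Matrix.one_apply, Matrix.of_apply,
        smul_eq_mul, mul_ite, mul_one, mul_zero]
      by_cases h : i = j <;> simp [h] <;> ring
    rw [heq]
    refine Matrix.PosSemidef.of_dotProduct_mulVec_nonneg ?_ ?_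
    · ext i j
      simp only [Matrix.conjTranspose_apply, Matrix.of_apply, star_trivial]
      simp only [ite_self]
      ring
    · intro w
      rw [star_trivial, quad_form]
      rcases eq_or_lt_of_le hr2nn with h0 | hpos
      · have hx0 : ∀ i, x i = 0 := hxz h0.symm
        simp [hx0]
      · have hnb : 0 ≤ -b := by
          rw [hb, neg_neg]
          exact div_nonneg (by linarith) hr2nn
        have := mul_nonneg hnb (sq_nonneg (∑ i, x i * w i))
        simpa using this

/-- The real inner product as a genuinely real-bilinear continuous map. -/
noncomputable def JJ {N : ℕ} :
    EuclideanSpace ℝ (Fin N) →L[ℝ] EuclideanSpace ℝ (Fin N) →L[ℝ] ℝ := innerSL ℝ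

lemma JJ_apply {N : ℕ} (x y : EuclideanSpace ℝ (Fin N)) : JJ x y = ⟪x, y⟫ := rfl

lemma hasFDerivAt_base {N : ℕ} (a p : ℝ) (x : EuclideanSpace ℝ (Fin N)) :
    HasFDerivAt (fun y : EuclideanSpace ℝ (Fin N) => a * (1 + ‖y‖ ^ 2) ^ p)
      ((2 * a * p * (1 + ‖x‖ ^ 2) ^ (p - 1)) • JJ x) x := by
  have hT : (0:ℝ) < 1 + ‖x‖ ^ 2 := by positivity
  have h1 : HasFDerivAt (fun y : EuclideanSpace ℝ (Fin N) => 1 + ‖y‖ ^ 2)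
      ((2:ℝ) • JJ x) x := by
    have h := ((hasStrictFDerivAt_norm_sq x).hasFDerivAt).const_add (1:ℝ)
    have e : ((2:ℕ) • innerSL ℝ x : EuclideanSpace ℝ (Fin N) →L[ℝ] ℝ) = (2:ℝ) • JJ x := by
      ext y; simp [JJ_apply]
    rwa [e] at h
  have h2 : HasDerivAt (fun r : ℝ => a * r ^ p)
      (a * (p * (1 + ‖x‖ ^ 2) ^ (p - 1))) (1 + ‖x‖ ^ 2) :=
    (Real.hasDerivAt_rpow_const (Or.inl hT.ne')).const_mul a
  have h3 := h2.comp_hasFDerivAt x h1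
  refine h3.congr_fderiv ?_
  rw [smul_smul]; ring_nf

lemma hasFDerivAt_deriv_base {N : ℕ} (a p : ℝ) (x : EuclideanSpace ℝ (Fin N)) :
    HasFDerivAt (fun y : EuclideanSpace ℝ (Fin N) =>
        (2 * a * p * (1 + ‖y‖ ^ 2) ^ (p - 1)) • JJ y)
      (((2 * a * p) * (1 + ‖x‖ ^ 2) ^ (p - 1)) • JJ
        + ((2 * (2 * a * p) * (p - 1) * (1 + ‖x‖ ^ 2) ^ (p - 1 - 1)) • JJ x).smulRight
            (JJ x)) x := by
  have hc : HasFDerivAt (fun y : EuclideanSpace ℝ (Fin N) =>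
        2 * a * p * (1 + ‖y‖ ^ 2) ^ (p - 1))
      ((2 * (2 * a * p) * (p - 1) * (1 + ‖x‖ ^ 2) ^ (p - 1 - 1)) • JJ x) x :=
    hasFDerivAt_base (2 * a * p) (p - 1) x
  have hf : HasFDerivAt (fun y : EuclideanSpace ℝ (Fin N) => JJ y) (JJ (N := N)) x :=
    JJ.hasFDerivAt
  exact hc.smul hf

lemma fderiv_w {N : ℕ} (a p : ℝ) :
    fderiv ℝ (fun y : EuclideanSpace ℝ (Fin N) => a * (1 + ‖y‖ ^ 2) ^ p)
    = fun y : EuclideanSpace ℝ (Fin N) => (2 * a * p * (1 + ‖y‖ ^ 2) ^ (p - 1)) • JJ y :=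
  funext fun y => (hasFDerivAt_base a p y).fderiv

lemma hess_w {N : ℕ} (a p : ℝ) (x : EuclideanSpace ℝ (Fin N)) (i j : Fin N) :
    hess (fun y : EuclideanSpace ℝ (Fin N) => a * (1 + ‖y‖ ^ 2) ^ p) x i j
    = (2 * a * p * (1 + ‖x‖ ^ 2) ^ (p - 1)) * (if i = j then 1 else 0)
      + (2 * (2 * a * p) * (p - 1) * (1 + ‖x‖ ^ 2) ^ (p - 1 - 1)) * (x i * x j) := by
  rw [hess, iteratedFDeriv_two_apply, fderiv_w, (hasFDerivAt_deriv_base a p x).fderiv]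
  simp only [Matrix.cons_val_zero, Matrix.cons_val_one, Matrix.head_cons,
    ContinuousLinearMap.add_apply, ContinuousLinearMap.smul_apply,
    ContinuousLinearMap.smulRight_apply, JJ_apply, smul_eq_mul]
  rw [EuclideanSpace.inner_single_right]
  simp [EuclideanSpace.single_apply, eq_comm, EuclideanSpace.inner_single_right]
  ring

lemma grad_w {N : ℕ} (a p : ℝ) (x : EuclideanSpace ℝ (Fin N)) :
    gradient (fun y : EuclideanSpace ℝ (Fin N) => a * (1 + ‖y‖ ^ 2) ^ p) x
      = (2 * a * p * (1 + ‖x‖ ^ 2) ^ (p - 1)) • x := by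
  apply HasGradientAt.gradient
  rw [hasGradientAt_iff_hasFDerivAt]
  have e : InnerProductSpace.toDual ℝ (EuclideanSpace ℝ (Fin N))
      ((2 * a * p * (1 + ‖x‖ ^ 2) ^ (p - 1)) • x)
      = (2 * a * p * (1 + ‖x‖ ^ 2) ^ (p - 1)) • JJ x := by
    ext y
    simp [InnerProductSpace.toDual_apply_apply, JJ_apply, real_inner_smul_left]
  rw [e]
  exact hasFDerivAt_base a p x

end Aux

set_option maxHeartbeats 2000000 in
/-- if `(β−2)q + (β−1)γ > β`, there exist `δ ∈ (0, β−2)` and `C_δ > 0` such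
that `v(x) = C_δ(1+|x|²)^{-δ/2}` is a nonconstant, nonnegative classical solution of
`M⁺_{λ,Λ}(D²v) ≥ v^q |Dv|^γ` in `ℝ^N`. -/
theorem stmt6 {N : ℕ} (hN : 2 < N) (lam Lam β q γ : ℝ) (hlam : 0 < lam) (hle : lam ≤ Lam)
    (hβ : β = Lam / lam * (N - 1) + 1) (hβ2 : 2 < β) (hq : 0 ≤ q) (hγ : 1 < γ)
    (hqγ : (β - 2) * q + (β - 1) * γ > β) :
    ∃ δ : ℝ, 0 < δ ∧ δ < β - 2 ∧ ∃ C : ℝ, 0 < C ∧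
      ∀ v : EuclideanSpace ℝ (Fin N) → ℝ,
        (∀ x : EuclideanSpace ℝ (Fin N), v x = C * (1 + ‖x‖ ^ 2) ^ (-(δ / 2))) →
        ContDiff ℝ (⊤ : ℕ∞) v ∧
        (∃ x y : EuclideanSpace ℝ (Fin N), v x ≠ v y) ∧
        (∀ x : EuclideanSpace ℝ (Fin N), 0 ≤ v x) ∧
        (∀ x : EuclideanSpace ℝ (Fin N),
          pucciSup lam Lam (hess v x) ≥ v x ^ q * ‖gradient v x‖ ^ γ) := by
  have hN3 : (3:ℝ) ≤ (N:ℝ) := by exact_mod_cast hN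
  have hqγ1 : 0 < q + γ - 1 := by linarith
  have hβ' : lam * (β - 1) = Lam * ((N:ℝ) - 1) := by
    rw [hβ]; field_simp; ring
  -- choice of δ
  set d0 : ℝ := max ((2 - γ) / (q + γ - 1)) 0 with hd0def
  have hfrac : (2 - γ) / (q + γ - 1) < β - 2 := by
    rw [div_lt_iff₀ hqγ1]; nlinarith
  have hd0lt : d0 < β - 2 := max_lt hfrac (by linarith)
  have hd0nn : 0 ≤ d0 := le_max_right _ _
  set δ : ℝ := (d0 + (β - 2)) / 2 with hδdef
  have hδpos : 0 < δ := by
    rw [hδdef]; linarith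
  have hδlt : δ < β - 2 := by
    rw [hδdef]; linarith
  have hδkey : 2 - γ ≤ δ * (q + γ - 1) := by
    have h1 : (2 - γ) / (q + γ - 1) ≤ d0 := le_max_left _ _
    have h2 : (2 - γ) / (q + γ - 1) ≤ δ := by rw [hδdef]; linarith
    rw [div_le_iff₀ hqγ1] at h2; linarith
  -- choice of C
  set K : ℝ := lam * (β - 2 - δ) * δ ^ (1 - γ) with hKdef
  have hK : 0 < K := by
    apply mul_pos (mul_pos hlam (by linarith)) (Real.rpow_pos_of_pos hδpos _)
  set C : ℝ := min 1 (K ^ ((q + γ - 1)⁻¹)) with hCdef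
  have hC : 0 < C := lt_min one_pos (Real.rpow_pos_of_pos hK _)
  have hCkey : C ^ (q + γ - 1) * δ ^ (γ - 1) ≤ lam * (β - 2 - δ) := by
    have h1 : C ≤ K ^ ((q + γ - 1)⁻¹) := min_le_right _ _
    have h2 : C ^ (q + γ - 1) ≤ (K ^ ((q + γ - 1)⁻¹)) ^ (q + γ - 1) :=
      Real.rpow_le_rpow hC.le h1 hqγ1.le
    have h3 : (K ^ ((q + γ - 1)⁻¹)) ^ (q + γ - 1) = K := by
      rw [← Real.rpow_mul hK.le, inv_mul_cancel₀ hqγ1.ne', Real.rpow_one]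
    have h4 : C ^ (q + γ - 1) * δ ^ (γ - 1) ≤ K * δ ^ (γ - 1) :=
      mul_le_mul_of_nonneg_right (h2.trans h3.le) (Real.rpow_nonneg hδpos.le _)
    have h5 : δ ^ (1 - γ) * δ ^ (γ - 1) = 1 := by
      rw [← Real.rpow_add hδpos]; norm_num
    calc C ^ (q + γ - 1) * δ ^ (γ - 1) ≤ K * δ ^ (γ - 1) := h4
      _ = lam * (β - 2 - δ) * (δ ^ (1 - γ) * δ ^ (γ - 1)) := by rw [hKdef]; ring
      _ = lam * (β - 2 - δ) := by rw [h5, mul_one]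
  refine ⟨δ, hδpos, hδlt, C, hC, ?_⟩
  intro v hv
  have hveq : v = fun y : EuclideanSpace ℝ (Fin N) => C * (1 + ‖y‖ ^ 2) ^ (-(δ / 2)) :=
    funext hv
  subst hveq
  refine ⟨?_, ?_, ?_, ?_⟩
  · -- smoothness
    refine contDiff_const.mul ?_
    rw [contDiff_iff_contDiffAt]
    intro y
    have h : ContDiffAt ℝ (⊤ : ℕ∞) (fun y : EuclideanSpace ℝ (Fin N) => 1 + ‖y‖ ^ 2) y :=
      (contDiff_const.add (contDiff_norm_sq ℝ)).contDiffAt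
    exact h.rpow_const_of_ne (by positivity)
  · -- nonconstant
    refine ⟨0, EuclideanSpace.single ⟨0, by omega⟩ 1, ?_⟩
    have h0 : ‖(0 : EuclideanSpace ℝ (Fin N))‖ = 0 := norm_zero
    have h1 : ‖EuclideanSpace.single (⟨0, by omega⟩ : Fin N) (1:ℝ)‖ = 1 := by
      rw [EuclideanSpace.norm_single]; norm_num
    simp only [h0, h1]
    have e0 : ((1:ℝ) + 0 ^ 2) ^ (-(δ / 2)) = 1 := by norm_num
    have e1 : ((1:ℝ) + 1 ^ 2) ^ (-(δ / 2)) < 1 := by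
      apply Real.rpow_lt_one_of_one_lt_of_neg (by norm_num) (by linarith)
    rw [e0]
    exact ne_of_gt (mul_lt_mul_of_pos_left e1 hC)
  · -- nonneg
    intro x
    positivity
  · -- main inequality
    intro x
    set T : ℝ := 1 + ‖x‖ ^ 2 with hTdef
    have hT : 0 < T := by positivity
    have hT1 : 1 ≤ T := le_add_of_nonneg_right (sq_nonneg _)
    set P1 : ℝ := T ^ (-(δ / 2) - 1) with hP1def
    set P2 : ℝ := T ^ (-(δ / 2) - 2) with hP2def
    have hP1 : 0 < P1 := Real.rpow_pos_of_pos hT _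
    have hP2 : 0 < P2 := Real.rpow_pos_of_pos hT _
    have hP12 : P1 = T * P2 := by
      rw [hP1def, hP2def, show -(δ/2) - 1 = 1 + (-(δ/2) - 2) by ring, Real.rpow_add hT,
        Real.rpow_one]
    set r2 : ℝ := ∑ i, x i ^ 2 with hr2def
    have hr2norm : r2 = ‖x‖ ^ 2 := by
      rw [hr2def, ← real_inner_self_eq_norm_sq]
      rw [PiLp.inner_apply]; simp [pow_two]
    have hr2nn : 0 ≤ r2 := Finset.sum_nonneg fun i _ => sq_nonneg _
    have hTr : T = 1 + r2 := by rw [hTdef, hr2norm]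
    -- the Hessian
    have hessEq : hess (fun y : EuclideanSpace ℝ (Fin N) =>
          C * (1 + ‖y‖ ^ 2) ^ (-(δ / 2))) x
        = Matrix.of fun i j => (if i = j then -(C * δ * P1) else 0)
            + (C * δ * (δ + 2) * P2) * (x i * x j) := by
      ext i j
      rw [hess_w]
      have e1 : 2 * C * (-(δ/2)) * (1 + ‖x‖ ^ 2) ^ (-(δ/2) - 1) = -(C * δ * P1) := by
        rw [hP1def, hTdef]; ring
      have e2 : 2 * (2 * C * (-(δ/2))) * (-(δ/2) - 1) * (1 + ‖x‖ ^ 2) ^ (-(δ/2) - 1 - 1)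
          = C * δ * (δ + 2) * P2 := by
        rw [hP2def, hTdef, show -(δ/2) - 1 - 1 = -(δ/2) - 2 by ring]; ring
      rw [e1, e2]
      rcases eq_or_ne i j with h | h
      · subst h
        simp only [Matrix.of_apply, ite_true, if_pos rfl, mul_one]
      · simp only [Matrix.of_apply, if_neg h, ite_false, mul_zero, zero_add]
    -- the admissible matrix
    obtain ⟨hAs, hA1, hA2⟩ := A_admissible (N := N) hlam hle (fun i => x i)
    have hpucci := le_pucciSup hlam.le
      (hess (fun y : EuclideanSpace ℝ (Fin N) => C * (1 + ‖y‖ ^ 2) ^ (-(δ / 2))) x)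
      _ hAs hA1 hA2
    -- trace computation
    have htr : ((Matrix.of fun i j => (if i = j then Lam else 0)
          + (-((Lam - lam) / r2)) * (x i * x j))
        * (hess (fun y : EuclideanSpace ℝ (Fin N) => C * (1 + ‖y‖ ^ 2) ^ (-(δ / 2))) x)).trace
        = Lam * (-(C * δ * P1)) * (N:ℝ)
          + (Lam * (C * δ * (δ + 2) * P2) + (-((Lam - lam) / r2)) * (-(C * δ * P1))) * r2
          + (-((Lam - lam) / r2)) * (C * δ * (δ + 2) * P2) * r2 ^ 2 := by
      rw [hessEq]
      exact trace_form Lam (-((Lam - lam) / r2)) (-(C * δ * P1)) (C * δ * (δ + 2) * P2)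
        (fun i => x i)
    -- lower bound for -trace
    have hn : (N:ℝ) = (lam * (β - 1) + Lam) / Lam := by
      have hLam : 0 < Lam := lt_of_lt_of_le hlam hle
      field_simp
      linarith only [hβ']
    have key1 : lam * (β - 2 - δ) * (C * δ * P1)
        ≤ -(((Matrix.of fun i j => (if i = j then Lam else 0)
          + (-((Lam - lam) / r2)) * (x i * x j))
        * (hess (fun y : EuclideanSpace ℝ (Fin N) => C * (1 + ‖y‖ ^ 2) ^ (-(δ / 2))) x)).trace) := by
      rw [htr]
      have hLam : 0 < Lam := lt_of_lt_of_le hlam hle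
      rcases eq_or_lt_of_le hr2nn with h0 | hpos
      · rw [← h0]
        rw [hn]
        have hpos1 : 0 < C * δ * P1 := mul_pos (mul_pos hC hδpos) hP1
        have hgoal : -(Lam * (-(C * δ * P1)) * ((lam * (β - 1) + Lam) / Lam)
            + (Lam * (C * δ * (δ + 2) * P2) + -((Lam - lam) / 0) * -(C * δ * P1)) * 0
            + -((Lam - lam) / 0) * (C * δ * (δ + 2) * P2) * 0 ^ 2)
            = lam * (β - 2 - δ) * (C * δ * P1) + C * δ * P1 * (lam * (1 + δ) + Lam) := by
          field_simp
          ring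
        rw [hgoal]
        have h2 : 0 < lam * (1 + δ) + Lam := by
          have h4 := mul_pos hlam hδpos
          linarith only [h4, hlam, hle]
        have h3 : 0 < C * δ * P1 * (lam * (1 + δ) + Lam) := mul_pos hpos1 h2
        linarith only [h3]
      · have hbr : -((Lam - lam) / r2) * r2 = -(Lam - lam) := by
          field_simp
        have collect : Lam * (-(C * δ * P1)) * (N:ℝ)
            + (Lam * (C * δ * (δ + 2) * P2) + (-((Lam - lam) / r2)) * (-(C * δ * P1))) * r2
            + (-((Lam - lam) / r2)) * (C * δ * (δ + 2) * P2) * r2 ^ 2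
            = Lam * (-(C * δ * P1)) * (N:ℝ) + Lam * (C * δ * (δ + 2) * P2) * r2
              + (-((Lam - lam) / r2) * r2) * ((-(C * δ * P1)) + (C * δ * (δ + 2) * P2) * r2) := by
          ring
        rw [collect, hbr, hP12, hTr, hn]
        have h1 : 0 < C * δ * P2 := mul_pos (mul_pos hC hδpos) hP2
        have hgoal : -(Lam * -(C * δ * ((1 + r2) * P2)) * ((lam * (β - 1) + Lam) / Lam)
            + Lam * (C * δ * (δ + 2) * P2) * r2
            + -(Lam - lam) * (-(C * δ * ((1 + r2) * P2)) + C * δ * (δ + 2) * P2 * r2))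
            = lam * (β - 2 - δ) * (C * δ * ((1 + r2) * P2))
              + C * δ * P2 * lam * (δ + 2) := by
          field_simp
          ring
        rw [hgoal]
        have h2 : 0 < C * δ * P2 * lam * (δ + 2) :=
          mul_pos (mul_pos h1 hlam) (by linarith only [hδpos])
        linarith only [h2]
    -- the gradient
    have hgrad : ‖gradient (fun y : EuclideanSpace ℝ (Fin N) =>
          C * (1 + ‖y‖ ^ 2) ^ (-(δ / 2))) x‖ = C * δ * P1 * ‖x‖ := by
      rw [grad_w, norm_smul, Real.norm_eq_abs]
      have e1 : 2 * C * (-(δ/2)) * (1 + ‖x‖ ^ 2) ^ (-(δ/2) - 1) = -(C * δ * P1) := by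
        rw [hP1def, hTdef]; ring
      rw [e1, abs_neg, abs_of_pos (mul_pos (mul_pos hC hδpos) hP1)]
    -- bound on the right-hand side
    have hvx : C * (1 + ‖x‖ ^ 2) ^ (-(δ / 2)) = C * T ^ (-(δ / 2)) := by rw [hTdef]
    have hRHS : (C * (1 + ‖x‖ ^ 2) ^ (-(δ / 2))) ^ q
        * ‖gradient (fun y : EuclideanSpace ℝ (Fin N) =>
            C * (1 + ‖y‖ ^ 2) ^ (-(δ / 2))) x‖ ^ γ
        ≤ lam * (β - 2 - δ) * (C * δ * P1) := by
      rw [hgrad, hvx]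
      have hTpow : 0 ≤ T ^ (-(δ/2)) := Real.rpow_nonneg hT.le _
      have hxn : 0 ≤ ‖x‖ := norm_nonneg _
      have hCδP1 : 0 ≤ C * δ * P1 := le_of_lt (mul_pos (mul_pos hC hδpos) hP1)
      -- expand the powers
      have e1 : (C * T ^ (-(δ/2))) ^ q = C ^ q * T ^ (-(δ/2) * q) := by
        rw [Real.mul_rpow hC.le hTpow, ← Real.rpow_mul hT.le]
      have e2 : (C * δ * P1 * ‖x‖) ^ γ
          = C ^ γ * δ ^ γ * T ^ ((-(δ/2) - 1) * γ) * ‖x‖ ^ γ := by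
        rw [Real.mul_rpow hCδP1 hxn, Real.mul_rpow (mul_nonneg hC.le hδpos.le) hP1.le,
          Real.mul_rpow hC.le hδpos.le, hP1def, ← Real.rpow_mul hT.le]
      rw [e1, e2]
      have hxγ : ‖x‖ ^ γ ≤ T ^ (γ / 2) := by
        have h1 : ‖x‖ ^ γ = (‖x‖ ^ 2 : ℝ) ^ (γ / 2) := by
          rw [← Real.rpow_natCast ‖x‖ 2, ← Real.rpow_mul (norm_nonneg x)]
          congr 1
          push_cast
          ring
        rw [h1]
        exact Real.rpow_le_rpow (sq_nonneg _)
          (by rw [hTdef]; exact le_add_of_nonneg_left zero_le_one) (by linarith only [hγ])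
      have step1 : C ^ q * T ^ (-(δ/2) * q) * (C ^ γ * δ ^ γ * T ^ ((-(δ/2) - 1) * γ) * ‖x‖ ^ γ)
          ≤ C ^ q * T ^ (-(δ/2) * q) * (C ^ γ * δ ^ γ * T ^ ((-(δ/2) - 1) * γ) * T ^ (γ / 2)) := by
        apply mul_le_mul_of_nonneg_left
        · apply mul_le_mul_of_nonneg_left hxγ
          positivity
        · positivity
      have hcollect : C ^ q * T ^ (-(δ/2) * q) * (C ^ γ * δ ^ γ * T ^ ((-(δ/2) - 1) * γ) * T ^ (γ / 2))
          = (C ^ q * C ^ γ * δ ^ γ) * T ^ (-(δ/2) * q + ((-(δ/2) - 1) * γ + γ / 2)) := by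
        rw [Real.rpow_add hT, Real.rpow_add hT]
        ring
      have hexp : -(δ/2) * q + ((-(δ/2) - 1) * γ + γ / 2) ≤ -(δ/2) - 1 := by
        linarith only [hδkey]
      have hTexp : T ^ (-(δ/2) * q + ((-(δ/2) - 1) * γ + γ / 2)) ≤ P1 := by
        rw [hP1def]
        exact Real.rpow_le_rpow_of_exponent_le hT1 hexp
      have hcoef : C ^ q * C ^ γ * δ ^ γ ≤ lam * (β - 2 - δ) * (C * δ) := by
        have e3 : C ^ q * C ^ γ * δ ^ γ = (C ^ (q + γ - 1) * δ ^ (γ - 1)) * (C * δ) := by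
          rw [show q + γ - 1 = q + γ + -1 by ring, show γ - 1 = γ + -1 by ring,
            Real.rpow_add hC, Real.rpow_add hC, Real.rpow_add hδpos,
            Real.rpow_neg_one, Real.rpow_neg_one]
          field_simp
        rw [e3]
        exact mul_le_mul_of_nonneg_right hCkey (le_of_lt (mul_pos hC hδpos))
      calc C ^ q * T ^ (-(δ/2) * q) * (C ^ γ * δ ^ γ * T ^ ((-(δ/2) - 1) * γ) * ‖x‖ ^ γ)
          ≤ (C ^ q * C ^ γ * δ ^ γ) * T ^ (-(δ/2) * q + ((-(δ/2) - 1) * γ + γ / 2)) := by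
            rw [← hcollect]; exact step1
        _ ≤ (C ^ q * C ^ γ * δ ^ γ) * P1 := by
            apply mul_le_mul_of_nonneg_left hTexp
            positivity
        _ ≤ (lam * (β - 2 - δ) * (C * δ)) * P1 :=
            mul_le_mul_of_nonneg_right hcoef hP1.le
        _ = lam * (β - 2 - δ) * (C * δ * P1) := by ring
    refine le_trans hRHS (le_trans key1 ?_)
    exact hpucci
end

section
/- Let N > 2, 0 < λ ≤ Λ, β = (Λ/λ)(N−1)+1 > 2, and γ > β/(β−1) with γ < 2. Then there exists c > 0 such that u(x) = c(1+|x|²)^{-(2−γ)/(2(γ−1))} is a nonconstant classical solution of M⁺_{λ,Λ}(D²u(x)) ≥ |Du(x)|^γ in ℝ^N. -/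
open Matrix Real Filter
open scoped RealInnerProductSpace

section Aux
variable {N : ℕ}


lemma hasFDerivAt_aux (c p : ℝ) (x : EuclideanSpace ℝ (Fin N)) :
    HasFDerivAt (fun y : EuclideanSpace ℝ (Fin N) => c * (1 + ‖y‖ ^ 2) ^ p)
      ((2 * c * p * (1 + ‖x‖ ^ 2) ^ (p - 1)) • innerSL ℝ x) x := by
  have hw : (0:ℝ) < 1 + ‖x‖ ^ 2 := by positivity
  have hq : HasFDerivAt (fun y : EuclideanSpace ℝ (Fin N) => 1 + ‖y‖ ^ 2)
      (2 • innerSL ℝ x) x := by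
    simpa using (hasFDerivAt_id x).norm_sq.const_add (1:ℝ)
  have hg : HasDerivAt (fun s : ℝ => c * s ^ p) (c * (p * (1 + ‖x‖ ^ 2) ^ (p - 1)))
      (1 + ‖x‖ ^ 2) :=
    (Real.hasDerivAt_rpow_const (Or.inl hw.ne')).const_mul c
  have h2 := hg.comp_hasFDerivAt x hq
  refine h2.congr_fderiv ?_
  rw [two_nsmul, smul_add, ← add_smul]
  congr 1
  ring

lemma fderiv_aux (c p : ℝ) :
    fderiv ℝ (fun y : EuclideanSpace ℝ (Fin N) => c * (1 + ‖y‖ ^ 2) ^ p)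
      = fun x => (2 * c * p * (1 + ‖x‖ ^ 2) ^ (p - 1)) • innerSL ℝ x :=
  funext fun x => (hasFDerivAt_aux c p x).fderiv


lemma hess_aux (c p : ℝ) (x : EuclideanSpace ℝ (Fin N)) (i j : Fin N) :
    hess (fun y : EuclideanSpace ℝ (Fin N) => c * (1 + ‖y‖ ^ 2) ^ p) x i j
      = 4 * c * p * (p - 1) * (1 + ‖x‖ ^ 2) ^ (p - 2) * (x i * x j)
        + 2 * c * p * (1 + ‖x‖ ^ 2) ^ (p - 1) * (if i = j then 1 else 0) := by
  rw [hess, iteratedFDeriv_two_apply, fderiv_aux]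
  have hh := hasFDerivAt_aux (N := N) (2 * c * p) (p - 1) x
  have hi : HasFDerivAt (fun y : EuclideanSpace ℝ (Fin N) => innerSL ℝ y)
      (innerSL ℝ : EuclideanSpace ℝ (Fin N) →L[ℝ] EuclideanSpace ℝ (Fin N) →L[ℝ] ℝ) x :=
    (innerSL ℝ : EuclideanSpace ℝ (Fin N) →L[ℝ]
      EuclideanSpace ℝ (Fin N) →L[ℝ] ℝ).hasFDerivAt
  have h2 := hh.smul hi
  rw [HasFDerivAt.fderiv (f := fun y : EuclideanSpace ℝ (Fin N) => (2 * c * p * (1 + ‖y‖ ^ 2) ^ (p - 1)) • innerSL ℝ y) h2]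
  have e1 : p - 1 - 1 = p - 2 := by ring
  simp only [e1, Matrix.cons_val_zero, Matrix.cons_val_one, Matrix.head_cons,
    ContinuousLinearMap.add_apply, ContinuousLinearMap.smul_apply,
    ContinuousLinearMap.smulRight_apply, innerSL_apply_apply, smul_eq_mul,
    ContinuousLinearMap.coe_smul', Pi.smul_apply]
  rw [show (inner ℝ x (EuclideanSpace.single i 1) : ℝ) = x i by
    simp [EuclideanSpace.inner_single_right]]
  rw [show (inner ℝ x (EuclideanSpace.single j 1) : ℝ) = x j by
    simp [EuclideanSpace.inner_single_right]]
  rw [show (innerSL ℝ (EuclideanSpace.single i (1:ℝ)) (EuclideanSpace.single j (1:ℝ)) : ℝ)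
      = (if i = j then (1:ℝ) else 0) by
    simp [innerSL_apply_apply, EuclideanSpace.inner_single_left, EuclideanSpace.single_apply, eq_comm]]
  ring

lemma gradient_aux (c p : ℝ) (x : EuclideanSpace ℝ (Fin N)) :
    gradient (fun y : EuclideanSpace ℝ (Fin N) => c * (1 + ‖y‖ ^ 2) ^ p) x
      = (2 * c * p * (1 + ‖x‖ ^ 2) ^ (p - 1)) • x := by
  apply HasGradientAt.gradient
  rw [hasGradientAt_iff_hasFDerivAt]
  exact (hasFDerivAt_aux c p x).congr_fderiv (by
    ext v
    simp [InnerProductSpace.toDual_apply_apply, inner_smul_left])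

lemma contDiff_aux (c p : ℝ) :
    ContDiff ℝ (⊤ : ℕ∞) (fun y : EuclideanSpace ℝ (Fin N) => c * (1 + ‖y‖ ^ 2) ^ p) := by
  refine contDiff_const.mul ?_
  have h1 : ContDiff ℝ (⊤ : ℕ∞) (fun y : EuclideanSpace ℝ (Fin N) => 1 + ‖y‖ ^ 2) :=
    contDiff_const.add (contDiff_norm_sq ℝ)
  refine contDiff_iff_contDiffAt.2 fun x => ?_
  exact (h1.contDiffAt).rpow_const_of_ne (by positivity)


lemma star_eq (v : Fin N → ℝ) : star v = v := by funext i; simp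

lemma quad_eval (a s : ℝ) (x v : Fin N → ℝ) :
    v ⬝ᵥ (Matrix.of fun i j => a * (if i = j then (1:ℝ) else 0) - s * (x i * x j)) *ᵥ v
      = a * (∑ i, v i ^ 2) - s * (∑ i, x i * v i) ^ 2 := by
  have hmv : ∀ i, ((Matrix.of fun i j => a * (if i = j then (1:ℝ) else 0) - s * (x i * x j)) *ᵥ v) i = a * v i - s * (x i * (∑ j, x j * v j)) := by
    intro i
    simp only [Matrix.mulVec, dotProduct, Matrix.of_apply, sub_mul, Finset.sum_sub_distrib, mul_ite, ite_mul,
      mul_one, one_mul, mul_zero, zero_mul, Finset.sum_ite_eq, Finset.mem_univ, if_true,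
      Finset.mul_sum]
    exact congrArg (a * v i - ·) (Finset.sum_congr rfl fun j _ => by ring)
  simp only [dotProduct, hmv]
  rw [Finset.sum_congr rfl (fun i _ => by ring :
    ∀ i ∈ Finset.univ, v i * (a * v i - s * (x i * (∑ j, x j * v j)))
      = a * v i ^ 2 - s * (∑ j, x j * v j) * (x i * v i))]
  rw [Finset.sum_sub_distrib, ← Finset.mul_sum]
  rw [show ∑ i : Fin N, s * (∑ j : Fin N, x j * v j) * (x i * v i)
      = s * (∑ j : Fin N, x j * v j) * (∑ i : Fin N, x i * v i) by rw [← Finset.mul_sum]]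
  ring

lemma trace_eval (L s K1 K2 : ℝ) (x : Fin N → ℝ) :
    ((Matrix.of fun i j => L * (if i = j then (1:ℝ) else 0) - s * (x i * x j)) *
      (Matrix.of fun i j => K2 * (x i * x j) + K1 * (if i = j then (1:ℝ) else 0))).trace
    = L * K2 * (∑ i, x i ^ 2) + L * K1 * N
      - s * K2 * (∑ i, x i ^ 2) ^ 2 - s * K1 * (∑ i, x i ^ 2) := by
  simp only [Matrix.trace, Matrix.diag, Matrix.mul_apply, Matrix.of_apply]
  have inner : ∀ i, (∑ j, ((L * (if i = j then (1:ℝ) else 0) - s * (x i * x j)) *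
      (K2 * (x j * x i) + K1 * (if j = i then (1:ℝ) else 0))))
      = L * K2 * x i ^ 2 + L * K1 - s * K2 * x i ^ 2 * (∑ k, x k ^ 2)
        - s * K1 * x i ^ 2 := by
    intro i
    have expand : ∀ j, (L * (if i = j then (1:ℝ) else 0) - s * (x i * x j)) *
        (K2 * (x j * x i) + K1 * (if j = i then (1:ℝ) else 0))
        = (if i = j then L * K2 * (x j * x i) + L * K1 * (if j = i then (1:ℝ) else 0) else 0)
          - s * K2 * x i ^ 2 * x j ^ 2 - (if j = i then s * K1 * (x i * x j) else 0) := by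
      intro j
      by_cases h : i = j
      · subst h; simp; ring
      · have h' : ¬ (j = i) := fun hh => h hh.symm
        simp [h, h']; ring
    rw [Finset.sum_congr rfl fun j _ => expand j]
    simp only [Finset.sum_sub_distrib, Finset.sum_ite_eq, Finset.sum_ite_eq',
      Finset.mem_univ, if_true]
    rw [show ∑ j : Fin N, s * K2 * x i ^ 2 * x j ^ 2 = s * K2 * x i ^ 2 * ∑ k, x k ^ 2 by
      rw [← Finset.mul_sum]]
    simp
    ring
  rw [Finset.sum_congr rfl fun i _ => inner i]
  simp only [Finset.sum_sub_distrib, Finset.sum_add_distrib, Finset.sum_const,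
    Finset.card_univ, Fintype.card_fin, nsmul_eq_mul]
  rw [← Finset.sum_mul, ← Finset.mul_sum, ← Finset.mul_sum, ← Finset.mul_sum]
  ring

lemma psd_add {A B : Matrix (Fin N) (Fin N) ℝ} (hA : A.PosSemidef) (hB : B.PosSemidef) :
    (A + B).PosSemidef := by
  refine ⟨hA.1.add hB.1, fun v => ?_⟩
  have := add_nonneg (hA.2 v) (hB.2 v)
  simpa [mul_add, add_mul] using this

lemma psd_smul_one {a : ℝ} (ha : 0 ≤ a) :
    (a • (1 : Matrix (Fin N) (Fin N) ℝ)).PosSemidef := by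
  rw [Matrix.smul_one_eq_diagonal]
  exact Matrix.PosSemidef.diagonal fun i => ha

lemma quad_single (A : Matrix (Fin N) (Fin N) ℝ) (i : Fin N) :
    (Pi.single i (1:ℝ)) ⬝ᵥ A *ᵥ (Pi.single i (1:ℝ)) = A i i := by
  simp [Matrix.mulVec_single, single_dotProduct]

lemma quad_pair (A : Matrix (Fin N) (Fin N) ℝ) (i j : Fin N) (a b : ℝ) :
    (Pi.single i a + Pi.single j b) ⬝ᵥ A *ᵥ (Pi.single i a + Pi.single j b)
      = a * (A i i * a + A i j * b) + b * (A j i * a + A j j * b) := by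
  simp [Matrix.mulVec_add, Matrix.mulVec_single, add_dotProduct,
    single_dotProduct, Pi.add_apply]
  ring

lemma admissible_entry_bound {lam Lam : ℝ} (hlam : 0 < lam) {A : Matrix (Fin N) (Fin N) ℝ}
    (hs : A.IsSymm) (h1 : (A - lam • (1 : Matrix (Fin N) (Fin N) ℝ)).PosSemidef)
    (h2 : (Lam • (1 : Matrix (Fin N) (Fin N) ℝ) - A).PosSemidef) (i j : Fin N) :
    |A i j| ≤ Lam := by
  have hApsd : A.PosSemidef := by
    have := psd_add h1 (psd_smul_one (le_of_lt hlam))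
    simpa using this
  have hdiag : ∀ k, 0 ≤ A k k := by
    intro k
    have := hApsd.dotProduct_mulVec_nonneg (Pi.single k (1:ℝ))
    rwa [star_eq, quad_single] at this
  have hdiag2 : ∀ k, A k k ≤ Lam := by
    intro k
    have := h2.dotProduct_mulVec_nonneg (Pi.single k (1:ℝ))
    rw [star_eq, quad_single] at this
    simp [Matrix.sub_apply, Matrix.smul_apply, Matrix.one_apply] at this
    linarith
  by_cases hij : i = j
  · subst hij
    rw [abs_of_nonneg (hdiag i)]; exact hdiag2 i
  · have hsym : A j i = A i j := hs.apply i j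
    have hp := hApsd.dotProduct_mulVec_nonneg (Pi.single i (1:ℝ) + Pi.single j (1:ℝ))
    have hm := hApsd.dotProduct_mulVec_nonneg (Pi.single i (1:ℝ) + Pi.single j (-1:ℝ))
    rw [star_eq, quad_pair] at hp hm
    rw [abs_le]
    constructor
    · nlinarith [hdiag2 i, hdiag2 j]
    · nlinarith [hdiag2 i, hdiag2 j]

lemma pucciSup_ge {lam Lam : ℝ} (hlam : 0 < lam) (M A : Matrix (Fin N) (Fin N) ℝ)
    (hs : A.IsSymm) (h1 : (A - lam • (1 : Matrix (Fin N) (Fin N) ℝ)).PosSemidef)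
    (h2 : (Lam • (1 : Matrix (Fin N) (Fin N) ℝ) - A).PosSemidef) :
    -(A * M).trace ≤ pucciSup lam Lam M := by
  apply le_csSup
  · refine ⟨Lam * ∑ i, ∑ j, |M j i|, ?_⟩
    rintro t ⟨B, hBs, hB1, hB2, rfl⟩
    have hentry := admissible_entry_bound hlam hBs hB1 hB2
    have htr : (B * M).trace = ∑ i, ∑ j, B i j * M j i := by
      simp [Matrix.trace, Matrix.diag, Matrix.mul_apply]
    rw [htr]
    have : |∑ i, ∑ j, B i j * M j i| ≤ Lam * ∑ i, ∑ j, |M j i| := by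
      calc |∑ i, ∑ j, B i j * M j i| ≤ ∑ i, |∑ j, B i j * M j i| :=
            Finset.abs_sum_le_sum_abs _ _
        _ ≤ ∑ i, ∑ j, |B i j * M j i| :=
            Finset.sum_le_sum fun i _ => Finset.abs_sum_le_sum_abs _ _
        _ ≤ ∑ i, ∑ j, Lam * |M j i| := by
            refine Finset.sum_le_sum fun i _ => Finset.sum_le_sum fun j _ => ?_
            rw [abs_mul]
            exact mul_le_mul_of_nonneg_right (hentry i j) (abs_nonneg _)
        _ = Lam * ∑ i, ∑ j, |M j i| := by
            rw [Finset.mul_sum]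
            exact Finset.sum_congr rfl fun i _ => (Finset.mul_sum _ _ _).symm
    calc -(∑ i, ∑ j, B i j * M j i) ≤ |∑ i, ∑ j, B i j * M j i| := neg_le_abs _
      _ ≤ _ := this
  · exact ⟨A, hs, h1, h2, rfl⟩

lemma admissible_constructed {lam Lam : ℝ} (hlam : 0 < lam) (hle : lam ≤ Lam)
    (x : Fin N → ℝ) :
    (Matrix.of fun i j => Lam * (if i = j then (1:ℝ) else 0)
        - (Lam - lam) / (∑ k, x k ^ 2) * (x i * x j)).IsSymm ∧
    ((Matrix.of fun i j => Lam * (if i = j then (1:ℝ) else 0)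
        - (Lam - lam) / (∑ k, x k ^ 2) * (x i * x j))
      - lam • (1 : Matrix (Fin N) (Fin N) ℝ)).PosSemidef ∧
    (Lam • (1 : Matrix (Fin N) (Fin N) ℝ)
      - (Matrix.of fun i j => Lam * (if i = j then (1:ℝ) else 0)
        - (Lam - lam) / (∑ k, x k ^ 2) * (x i * x j))).PosSemidef := by
  set R := ∑ k, x k ^ 2 with hR
  have hRnn : 0 ≤ R := Finset.sum_nonneg fun k _ => sq_nonneg _
  set s := (Lam - lam) / R with hs
  have hsnn : 0 ≤ s := div_nonneg (by linarith) hRnn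
  have hCS : ∀ v : Fin N → ℝ, s * (∑ i, x i * v i) ^ 2 ≤ (Lam - lam) * ∑ i, v i ^ 2 := by
    intro v
    rcases eq_or_lt_of_le hRnn with hR0 | hRpos
    · have hx0 : ∀ k, x k = 0 := by
        intro k
        have := Finset.sum_eq_zero_iff_of_nonneg (fun i (_ : i ∈ Finset.univ) => sq_nonneg (x i))
        have h0 : ∀ i ∈ Finset.univ, x i ^ 2 = 0 := (this.mp hR0.symm)
        exact pow_eq_zero_iff (n := 2) (by norm_num) |>.mp (h0 k (Finset.mem_univ k))
      have : (∑ i, x i * v i) = 0 := Finset.sum_eq_zero fun i _ => by rw [hx0 i, zero_mul]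
      rw [this]
      have : (0:ℝ) ≤ (Lam - lam) * ∑ i, v i ^ 2 :=
        mul_nonneg (by linarith) (Finset.sum_nonneg fun i _ => sq_nonneg _)
      simpa using this
    · have hcs : (∑ i, x i * v i) ^ 2 ≤ R * ∑ i, v i ^ 2 := by
        simpa [hR] using Finset.sum_mul_sq_le_sq_mul_sq Finset.univ x v
      calc s * (∑ i, x i * v i) ^ 2 ≤ s * (R * ∑ i, v i ^ 2) := by
            apply mul_le_mul_of_nonneg_left hcs hsnn
        _ = (Lam - lam) * ∑ i, v i ^ 2 := by
            rw [hs]; field_simp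
  have hsymm : (Matrix.of fun i j => Lam * (if i = j then (1:ℝ) else 0) - s * (x i * x j)).IsSymm := by
    rw [Matrix.IsSymm]
    ext i j
    simp only [Matrix.transpose_apply, Matrix.of_apply]
    rw [show (if j = i then (1:ℝ) else 0) = (if i = j then (1:ℝ) else 0) by simp [eq_comm]]
    ring
  refine ⟨hsymm, ?_, ?_⟩
  · have hEq : (Matrix.of fun i j => Lam * (if i = j then (1:ℝ) else 0) - s * (x i * x j))
        - lam • (1 : Matrix (Fin N) (Fin N) ℝ)
        = Matrix.of fun i j => (Lam - lam) * (if i = j then (1:ℝ) else 0) - s * (x i * x j) := by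
      ext i j
      simp [Matrix.sub_apply, Matrix.smul_apply, Matrix.one_apply, mul_ite]
      split <;> ring
    rw [hEq]
    refine Matrix.PosSemidef.of_dotProduct_mulVec_nonneg ?_ ?_
    · rw [Matrix.IsHermitian]
      ext i j
      simp only [Matrix.conjTranspose_apply, Matrix.of_apply, star_trivial]
      rw [show (if j = i then (1:ℝ) else 0) = (if i = j then (1:ℝ) else 0) by simp [eq_comm]]
      ring
    · intro v
      rw [star_eq, quad_eval]
      have := hCS v
      linarith
  · have hEq : Lam • (1 : Matrix (Fin N) (Fin N) ℝ)
        - (Matrix.of fun i j => Lam * (if i = j then (1:ℝ) else 0) - s * (x i * x j))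
        = Matrix.of fun i j => 0 * (if i = j then (1:ℝ) else 0) - (-s) * (x i * x j) := by
      ext i j
      simp only [Matrix.sub_apply, Matrix.smul_apply, Matrix.one_apply, Matrix.of_apply,
        smul_eq_mul, mul_ite, mul_one, mul_zero]
      split <;> ring
    rw [hEq]
    refine Matrix.PosSemidef.of_dotProduct_mulVec_nonneg ?_ ?_
    · rw [Matrix.IsHermitian]
      ext i j
      simp only [Matrix.conjTranspose_apply, Matrix.of_apply, star_trivial]
      ring
    · intro v
      rw [star_eq, quad_eval]
      have h2 : 0 ≤ s * (∑ i, x i * v i) ^ 2 := mul_nonneg hsnn (sq_nonneg _)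
      linarith

end Aux

set_option maxHeartbeats 1600000 in
/-- for `β/(β−1) < γ < 2` there is `c > 0` such that
`u(x) = c(1+|x|²)^{-(2−γ)/(2(γ−1))}` is a nonconstant classical solution of
`M⁺_{λ,Λ}(D²u) ≥ |Du|^γ` in `ℝ^N`. -/
theorem stmt7 {N : ℕ} (hN : 2 < N) (lam Lam β γ : ℝ) (hlam : 0 < lam) (hle : lam ≤ Lam)
    (hβ : β = Lam / lam * (N - 1) + 1) (hβ2 : 2 < β)
    (hγl : β / (β - 1) < γ) (hγu : γ < 2) :
    ∃ c : ℝ, 0 < c ∧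
      ∀ u : EuclideanSpace ℝ (Fin N) → ℝ,
        (∀ x : EuclideanSpace ℝ (Fin N),
          u x = c * (1 + ‖x‖ ^ 2) ^ (-((2 - γ) / (2 * (γ - 1))))) →
        ContDiff ℝ (⊤ : ℕ∞) u ∧
        (∃ x y : EuclideanSpace ℝ (Fin N), u x ≠ u y) ∧
        (∀ x : EuclideanSpace ℝ (Fin N),
          pucciSup lam Lam (hess u x) ≥ ‖gradient u x‖ ^ γ) := by
  have hβ1 : (0:ℝ) < β - 1 := by linarith
  have hγ1 : 1 < γ := by
    have h1 : (1:ℝ) < β / (β - 1) := by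
      rw [lt_div_iff₀ hβ1]; linarith
    linarith
  have hγ1' : (0:ℝ) < γ - 1 := by linarith
  obtain ⟨p, hp⟩ : ∃ p : ℝ, p = -((2 - γ) / (2 * (γ - 1))) := ⟨_, rfl⟩
  obtain ⟨δ, hδ⟩ : ∃ δ : ℝ, δ = (2 - γ) / (γ - 1) := ⟨_, rfl⟩
  have hδpos : 0 < δ := hδ ▸ div_pos (by linarith) hγ1'
  have hpδ : p = -(δ/2) := by rw [hp, hδ]; field_simp
  have hppos : p < 0 := by rw [hpδ]; linarith
  have hδβ : δ < β - 2 := by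
    rw [hδ, div_lt_iff₀ hγ1']
    have h1 : β < γ * (β - 1) := by
      rw [div_lt_iff₀ hβ1] at hγl; linarith
    nlinarith [h1]
  have hkey : (p - 1) * γ + (1/2) * γ = p - 1 := by
    rw [hp]; field_simp; ring
  have hβlam : lam * β = Lam * ((N:ℝ) - 1) + lam := by
    rw [hβ]; field_simp
  obtain ⟨t, ht⟩ : ∃ t : ℝ, t = (lam * (β - 2 - δ)) ^ ((1:ℝ)/(γ-1)) := ⟨_, rfl⟩
  have hbpos : 0 < lam * (β - 2 - δ) := mul_pos hlam (by linarith)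
  have htpos : 0 < t := ht ▸ Real.rpow_pos_of_pos hbpos _
  have htg : t ^ (γ - 1) = lam * (β - 2 - δ) := by
    rw [ht, ← Real.rpow_mul hbpos.le, one_div_mul_cancel (ne_of_gt hγ1'), Real.rpow_one]
  have htγ : t ^ γ = t * (lam * (β - 2 - δ)) := by
    have h0 : t ^ γ = t ^ ((1:ℝ) + (γ-1)) := by norm_num
    rw [h0, Real.rpow_add htpos, Real.rpow_one, htg]
  obtain ⟨c, hc⟩ : ∃ c : ℝ, c = t / δ := ⟨_, rfl⟩
  have hcpos : 0 < c := hc ▸ div_pos htpos hδpos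
  have ha1 : 2 * c * p = -t := by rw [hc, hpδ]; field_simp
  have ha2 : 4 * c * p * (p - 1) = t * (δ + 2) := by rw [hc, hpδ]; field_simp; ring
  refine ⟨c, hcpos, fun u hu => ?_⟩
  have hufun : u = fun y : EuclideanSpace ℝ (Fin N) => c * (1 + ‖y‖ ^ 2) ^ p :=
    funext fun y => by rw [hu y, hp]
  subst hufun
  have hNpos : (0:ℕ) < N := by omega
  refine ⟨contDiff_aux c p, ?_, ?_⟩
  · -- nonconstant
    refine ⟨EuclideanSpace.single ⟨0, hNpos⟩ (1:ℝ), 0, ?_⟩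
    have h2p : (2:ℝ) ^ p < 1 := Real.rpow_lt_one_of_one_lt_of_neg one_lt_two hppos
    have e1 : ‖EuclideanSpace.single (⟨0, hNpos⟩ : Fin N) (1:ℝ)‖ = 1 := by
      rw [EuclideanSpace.norm_single]; norm_num
    show c * (1 + ‖EuclideanSpace.single (⟨0, hNpos⟩ : Fin N) (1:ℝ)‖ ^ 2) ^ p
      ≠ c * (1 + ‖(0 : EuclideanSpace ℝ (Fin N))‖ ^ 2) ^ p
    rw [e1, norm_zero]
    norm_num
    refine ne_of_lt ?_
    have h8 : 0 < c * (1 - 2 ^ p) := mul_pos hcpos (by linarith)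
    linarith
  · -- the differential inequality
    intro x
    have hr2nn : (0:ℝ) ≤ ‖x‖ ^ 2 := by positivity
    have hwpos : (0:ℝ) < 1 + ‖x‖ ^ 2 := by linarith
    have hr2sum : ‖x‖ ^ 2 = ∑ k, x k ^ 2 := by
      rw [EuclideanSpace.norm_eq, Real.sq_sqrt (Finset.sum_nonneg fun i _ => by positivity)]
      simp [Real.norm_eq_abs, sq_abs]
    obtain ⟨W1, hW1⟩ : ∃ W1 : ℝ, W1 = (1 + ‖x‖ ^ 2) ^ (p - 1) := ⟨_, rfl⟩
    obtain ⟨W2, hW2⟩ : ∃ W2 : ℝ, W2 = (1 + ‖x‖ ^ 2) ^ (p - 2) := ⟨_, rfl⟩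
    have hW1pos : 0 < W1 := hW1 ▸ Real.rpow_pos_of_pos hwpos _
    have hW2pos : 0 < W2 := hW2 ▸ Real.rpow_pos_of_pos hwpos _
    have hW12 : W1 = W2 * (1 + ‖x‖ ^ 2) := by
      rw [hW1, hW2, show p - 1 = (p-2) + 1 by ring, Real.rpow_add hwpos, Real.rpow_one]
    have hMeq : hess (fun y : EuclideanSpace ℝ (Fin N) => c * (1 + ‖y‖ ^ 2) ^ p) x
        = Matrix.of fun i j => t * (δ + 2) * W2 * (x i * x j)
            + -t * W1 * (if i = j then (1:ℝ) else 0) := by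
      ext i j
      rw [Matrix.of_apply, hess_aux c p x i j, ← hW1, ← hW2, ha1, ha2]
    obtain ⟨hAs, hA1, hA2⟩ := admissible_constructed (N := N) hlam hle x
    have hp1 := pucciSup_ge hlam
      (hess (fun y : EuclideanSpace ℝ (Fin N) => c * (1 + ‖y‖ ^ 2) ^ p) x) _ hAs hA1 hA2
    have htrv2 : ((Matrix.of fun i j => Lam * (if i = j then (1:ℝ) else 0)
          - (Lam - lam) / (∑ k, x k ^ 2) * (x i * x j)) *
        hess (fun y : EuclideanSpace ℝ (Fin N) => c * (1 + ‖y‖ ^ 2) ^ p) x).trace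
        = Lam * (t * (δ + 2) * W2) * (∑ k, x k ^ 2)
            + Lam * (-t * W1) * (N:ℝ)
            - (Lam - lam) / (∑ k, x k ^ 2) * (t * (δ + 2) * W2) * (∑ k, x k ^ 2) ^ 2
            - (Lam - lam) / (∑ k, x k ^ 2) * (-t * W1) * (∑ k, x k ^ 2) := by
      rw [hMeq]
      exact trace_eval (N := N) Lam ((Lam - lam) / ∑ k, x k ^ 2)
        (-t * W1) (t * (δ + 2) * W2) x
    rw [htrv2] at hp1
    -- lower bound for the trace value
    have hlow : t * lam * (β - 2 - δ) * W1
        ≤ -(Lam * (t * (δ + 2) * W2) * (∑ k, x k ^ 2)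
            + Lam * (-t * W1) * (N:ℝ)
            - (Lam - lam) / (∑ k, x k ^ 2) * (t * (δ + 2) * W2) * (∑ k, x k ^ 2) ^ 2
            - (Lam - lam) / (∑ k, x k ^ 2) * (-t * W1) * (∑ k, x k ^ 2)) := by
      rcases eq_or_lt_of_le (Finset.sum_nonneg fun k (_ : k ∈ Finset.univ) =>
          sq_nonneg (x k)) with hR0 | hRpos
      · have hR0' : (∑ k, x k ^ 2) = 0 := hR0.symm
        have hxw : (1:ℝ) + ‖x‖ ^ 2 = 1 := by rw [hr2sum, hR0']; ring
        have hW1one : W1 = 1 := by rw [hW1, hxw, Real.one_rpow]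
        have hW2one : W2 = 1 := by rw [hW2, hxw, Real.one_rpow]
        have hN3 : (3:ℝ) ≤ (N:ℝ) := by exact_mod_cast hN
        have hstep : lam * (β - 2 - δ) ≤ Lam * (N:ℝ) := by
          have h9 : 0 < lam * δ := mul_pos hlam hδpos
          linarith [hβlam]
        have hbig : -(Lam * (t * (δ + 2) * W2) * (∑ k, x k ^ 2)
              + Lam * (-t * W1) * (N:ℝ)
              - (Lam - lam) / (∑ k, x k ^ 2) * (t * (δ + 2) * W2) * (∑ k, x k ^ 2) ^ 2
              - (Lam - lam) / (∑ k, x k ^ 2) * (-t * W1) * (∑ k, x k ^ 2))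
            = t * Lam * (N:ℝ) := by
          rw [hR0', hW1one, hW2one]; ring
        rw [hbig, hW1one]
        have h10 := mul_le_mul_of_nonneg_left hstep htpos.le
        linarith
      · have h1 : (Lam - lam) / (∑ k, x k ^ 2) * (∑ k, x k ^ 2) = Lam - lam :=
          div_mul_cancel₀ _ (ne_of_gt hRpos)
        have hW12' : W1 = W2 * (1 + ∑ k, x k ^ 2) := by rw [hW12, hr2sum]
        have hEq : -(Lam * (t * (δ + 2) * W2) * (∑ k, x k ^ 2)
              + Lam * (-t * W1) * (N:ℝ)
              - (Lam - lam) / (∑ k, x k ^ 2) * (t * (δ + 2) * W2) * (∑ k, x k ^ 2) ^ 2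
              - (Lam - lam) / (∑ k, x k ^ 2) * (-t * W1) * (∑ k, x k ^ 2))
            = t * lam * (β - 2 - δ) * W1 + t * lam * (δ + 2) * W2 := by
          linear_combination (t * (δ + 2) * W2 * (∑ k, x k ^ 2) - t * W1) * h1
            + (-(t * W1)) * hβlam + (t * lam * (δ + 2)) * hW12'
        rw [hEq]
        linarith [mul_pos (mul_pos (mul_pos htpos hlam)
          (by linarith : (0:ℝ) < δ + 2)) hW2pos]
    -- norm of the gradient
    have hgrad : ‖gradient (fun y : EuclideanSpace ℝ (Fin N) => c * (1 + ‖y‖ ^ 2) ^ p) x‖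
        = t * W1 * ‖x‖ := by
      rw [gradient_aux c p x, norm_smul, Real.norm_eq_abs, ← hW1, ha1]
      rw [abs_mul, abs_neg, abs_of_pos htpos, abs_of_pos hW1pos]
    have hrhs : ‖gradient (fun y : EuclideanSpace ℝ (Fin N) => c * (1 + ‖y‖ ^ 2) ^ p) x‖ ^ γ
        ≤ t * lam * (β - 2 - δ) * W1 := by
      rw [hgrad]
      have h3 : (t * W1 * ‖x‖) ^ γ = t ^ γ * W1 ^ γ * ‖x‖ ^ γ := by
        rw [Real.mul_rpow (by positivity) (norm_nonneg x),
          Real.mul_rpow htpos.le hW1pos.le]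
      have hxle : ‖x‖ ≤ (1 + ‖x‖ ^ 2) ^ ((1:ℝ)/2) := by
        have h5 : (‖x‖ ^ 2 : ℝ) ≤ 1 + ‖x‖ ^ 2 := by linarith
        have h6 : ((‖x‖ ^ 2 : ℝ)) ^ ((1:ℝ)/2) = ‖x‖ := by
          rw [← Real.rpow_natCast ‖x‖ 2, ← Real.rpow_mul (norm_nonneg x)]
          norm_num
        calc ‖x‖ = ((‖x‖ ^ 2 : ℝ)) ^ ((1:ℝ)/2) := h6.symm
          _ ≤ (1 + ‖x‖ ^ 2) ^ ((1:ℝ)/2) :=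
              Real.rpow_le_rpow (by positivity) h5 (by norm_num)
      have hxγ : ‖x‖ ^ γ ≤ (1 + ‖x‖ ^ 2) ^ (((1:ℝ)/2) * γ) := by
        rw [Real.rpow_mul hwpos.le]
        exact Real.rpow_le_rpow (norm_nonneg x) hxle (by linarith)
      have hW1γ : W1 ^ γ = (1 + ‖x‖ ^ 2) ^ ((p - 1) * γ) := by
        rw [hW1, ← Real.rpow_mul hwpos.le]
      have hcomb : t ^ γ * W1 ^ γ * ‖x‖ ^ γ
          ≤ t ^ γ * W1 ^ γ * (1 + ‖x‖ ^ 2) ^ (((1:ℝ)/2) * γ) := by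
        apply mul_le_mul_of_nonneg_left hxγ
        positivity
      have hfin : t ^ γ * W1 ^ γ * (1 + ‖x‖ ^ 2) ^ (((1:ℝ)/2) * γ)
          = t * lam * (β - 2 - δ) * W1 := by
        rw [hW1γ, mul_assoc, ← Real.rpow_add hwpos,
          show (p - 1) * γ + 1/2 * γ = p - 1 from hkey, ← hW1, htγ]
        ring
      calc (t * W1 * ‖x‖) ^ γ = t ^ γ * W1 ^ γ * ‖x‖ ^ γ := h3
        _ ≤ t ^ γ * W1 ^ γ * (1 + ‖x‖ ^ 2) ^ (((1:ℝ)/2) * γ) := hcomb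
        _ = t * lam * (β - 2 - δ) * W1 := hfin
    rw [ge_iff_le]
    exact le_trans hrhs (le_trans hlow hp1)
end

section
/- Let q > β/(β−2) and γ > β/(β−1) with β > 2, and choose δ with max{2/(q−1), (2−γ)/(γ−1)} < δ < β−2. Then for K_δ > 0 small enough, v(x) = K_δ(1+|x|²)^{-δ/2} satisfies M⁺_{λ,Λ}(D²v(x)) ≥ v(x)^q + |Dv(x)|^γ for all x ∈ ℝ^N, where β = (Λ/λ)(N−1)+1. -/
open Matrix Real Filter
open scoped RealInnerProductSpace

/-! ### Auxiliary calculus lemmas -/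

noncomputable section StmtAux

/-- first-derivative scalar coefficient -/
def a1 (K δ u : ℝ) : ℝ := -(K*δ) * (1+u) ^ (-(δ/2) - 1)
/-- second-derivative scalar coefficient -/
def b1 (K δ u : ℝ) : ℝ := K*δ*(δ+2) * (1+u) ^ (-(δ/2) - 2)

lemma hasDerivAt_aux (c p s₀ : ℝ) (h : 0 ≤ s₀) :
    HasDerivAt (fun s : ℝ => c * (1+s) ^ p) (c * (p * (1+s₀) ^ (p-1))) s₀ := by
  have h1 : HasDerivAt (fun s : ℝ => 1+s) 1 s₀ := (hasDerivAt_id s₀).const_add 1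
  have h2 : HasDerivAt (fun y : ℝ => y ^ p) (p * (1+s₀) ^ (p-1)) (1+s₀) :=
    Real.hasDerivAt_rpow_const (Or.inl (by positivity))
  simpa using (h2.comp s₀ h1).const_mul c

variable {N : ℕ}

lemma hasFDerivAt_v (K δ : ℝ) (x : EuclideanSpace ℝ (Fin N)) :
    HasFDerivAt (fun y : EuclideanSpace ℝ (Fin N) => K * (1+‖y‖^2) ^ (-(δ/2)))
      ((a1 K δ (‖x‖^2)) • innerSL ℝ x) x := by
  have hn : HasFDerivAt (fun y : EuclideanSpace ℝ (Fin N) => ‖y‖^2)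
      ((2:ℕ) • innerSL ℝ x) x := (hasStrictFDerivAt_norm_sq x).hasFDerivAt
  have h := (hasDerivAt_aux K (-(δ/2)) (‖x‖^2) (by positivity)).comp_hasFDerivAt x hn
  refine h.congr_fderiv ?_
  ext y
  simp only [a1, ContinuousLinearMap.smul_apply, innerSL_apply_apply, smul_eq_mul,
    ContinuousLinearMap.coe_smul', Pi.smul_apply, nsmul_eq_mul]
  ring

lemma hasFDerivAt_a1 (K δ : ℝ) (x : EuclideanSpace ℝ (Fin N)) :
    HasFDerivAt (fun y : EuclideanSpace ℝ (Fin N) => a1 K δ (‖y‖^2))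
      ((b1 K δ (‖x‖^2)) • innerSL ℝ x) x := by
  have hn : HasFDerivAt (fun y : EuclideanSpace ℝ (Fin N) => ‖y‖^2)
      ((2:ℕ) • innerSL ℝ x) x := (hasStrictFDerivAt_norm_sq x).hasFDerivAt
  have h := (hasDerivAt_aux (-(K*δ)) (-(δ/2) - 1) (‖x‖^2)
      (by positivity)).comp_hasFDerivAt x hn
  refine h.congr_fderiv ?_
  ext y
  simp only [b1, ContinuousLinearMap.smul_apply, innerSL_apply_apply, smul_eq_mul,
    ContinuousLinearMap.coe_smul', Pi.smul_apply, nsmul_eq_mul]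
  rw [show (-(δ/2) - 1 - 1 : ℝ) = -(δ/2) - 2 by ring]
  ring

lemma contDiffAt_v (K δ : ℝ) (x : EuclideanSpace ℝ (Fin N)) :
    ContDiffAt ℝ 2 (fun y : EuclideanSpace ℝ (Fin N) => K * (1+‖y‖^2) ^ (-(δ/2))) x := by
  have h1 : ContDiffAt ℝ 2 (fun s : ℝ => K * (1+s) ^ (-(δ/2))) (‖x‖^2) := by
    have : (1 + ‖x‖^2 : ℝ) ≠ 0 := by positivity
    exact contDiffAt_const.mul
      ((Real.contDiffAt_rpow_const_of_ne this).comp (‖x‖^2)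
        (contDiffAt_const.add contDiffAt_id))
  exact h1.comp (f := fun y : EuclideanSpace ℝ (Fin N) => ‖y‖^2) x (contDiff_norm_sq ℝ).contDiffAt

/-- The key second-derivative computation. -/
lemma second_deriv_v (K δ : ℝ) (x : EuclideanSpace ℝ (Fin N)) (i j : Fin N) :
    fderiv ℝ (fderiv ℝ (fun y : EuclideanSpace ℝ (Fin N) => K * (1+‖y‖^2) ^ (-(δ/2)))) x
        (EuclideanSpace.single i 1) (EuclideanSpace.single j 1)
      = a1 K δ (‖x‖^2) * (if i = j then 1 else 0) + b1 K δ (‖x‖^2) * x i * x j := by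
  set v : EuclideanSpace ℝ (Fin N) → ℝ := fun y => K * (1+‖y‖^2) ^ (-(δ/2)) with hv
  set ej : EuclideanSpace ℝ (Fin N) := EuclideanSpace.single j 1 with hej
  have hc : DifferentiableAt ℝ (fderiv ℝ v) x :=
    (((contDiffAt_v K δ x).fderiv_right (m := 1) (by norm_num))).differentiableAt one_ne_zero
  have h1 : fderiv ℝ (fun y => (fderiv ℝ v y) ej) x =
      (fderiv ℝ (fderiv ℝ v) x).flip ej := by
    rw [fderiv_clm_apply hc (differentiableAt_const ej)]
    simp
  have h2 : (fun y : EuclideanSpace ℝ (Fin N) => (fderiv ℝ v y) ej)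
      = fun y => a1 K δ (‖y‖^2) * (innerSL ℝ ej y) := by
    funext y
    rw [(hasFDerivAt_v K δ y).fderiv]
    simp only [ContinuousLinearMap.smul_apply, innerSL_apply_apply, smul_eq_mul]
    rw [real_inner_comm]
  have h3 : HasFDerivAt (fun y : EuclideanSpace ℝ (Fin N) => a1 K δ (‖y‖^2) * (innerSL ℝ ej y))
      (a1 K δ (‖x‖^2) • (innerSL ℝ ej) +
        (innerSL ℝ ej x) • ((b1 K δ (‖x‖^2)) • innerSL ℝ x)) x :=
    (hasFDerivAt_a1 K δ x).mul ((innerSL ℝ ej).hasFDerivAt)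
  have h4 : fderiv ℝ (fun y => (fderiv ℝ v y) ej) x (EuclideanSpace.single i 1)
      = a1 K δ (‖x‖^2) * ⟪ej, EuclideanSpace.single i 1⟫
        + ⟪ej, x⟫ * (b1 K δ (‖x‖^2) * ⟪x, EuclideanSpace.single i 1⟫) := by
    rw [h2, h3.fderiv]
    simp [mul_comm]
  have h5 : fderiv ℝ (fderiv ℝ v) x (EuclideanSpace.single i 1) ej
      = fderiv ℝ (fun y => (fderiv ℝ v y) ej) x (EuclideanSpace.single i 1) := by
    rw [h1]; rfl
  rw [h5, h4]
  have e1 : ⟪ej, (EuclideanSpace.single i (1:ℝ))⟫ = (if i = j then (1:ℝ) else 0) := by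
    rw [hej, EuclideanSpace.inner_single_right]
    simp [EuclideanSpace.single_apply]
  have e2 : ⟪ej, x⟫ = x j := by
    rw [hej, real_inner_comm, EuclideanSpace.inner_single_right]; simp
  have e3 : ⟪x, (EuclideanSpace.single i (1:ℝ))⟫ = x i := by
    rw [EuclideanSpace.inner_single_right]; simp
  rw [e1, e2, e3]; ring

lemma gradient_v (K δ : ℝ) (x : EuclideanSpace ℝ (Fin N)) :
    gradient (fun y : EuclideanSpace ℝ (Fin N) => K * (1+‖y‖^2) ^ (-(δ/2))) x
      = a1 K δ (‖x‖^2) • x := by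
  have h : HasGradientAt (fun y : EuclideanSpace ℝ (Fin N) => K * (1+‖y‖^2) ^ (-(δ/2)))
      (a1 K δ (‖x‖^2) • x) x := by
    rw [hasGradientAt_iff_hasFDerivAt]
    refine (hasFDerivAt_v K δ x).congr_fderiv ?_
    ext y
    simp [InnerProductSpace.toDual_apply_apply, real_inner_smul_left]
  exact h.gradient

lemma hess_v_eq (K δ : ℝ) (x : EuclideanSpace ℝ (Fin N)) :
    hess (fun y : EuclideanSpace ℝ (Fin N) => K * (1+‖y‖^2) ^ (-(δ/2))) x
      = a1 K δ (‖x‖^2) • (1 : Matrix (Fin N) (Fin N) ℝ)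
        + b1 K δ (‖x‖^2) • Matrix.vecMulVec (fun i => x i) (fun i => x i) := by
  funext i j
  have : hess (fun y : EuclideanSpace ℝ (Fin N) => K * (1+‖y‖^2) ^ (-(δ/2))) x i j
      = fderiv ℝ (fderiv ℝ (fun y : EuclideanSpace ℝ (Fin N) => K * (1+‖y‖^2) ^ (-(δ/2)))) x
        (EuclideanSpace.single i 1) (EuclideanSpace.single j 1) := by
    rw [hess, iteratedFDeriv_two_apply]
    simp
  rw [this, second_deriv_v]
  simp only [Matrix.add_apply, Matrix.smul_apply, Matrix.one_apply, Matrix.vecMulVec_apply,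
    smul_eq_mul]
  by_cases h : i = j <;> simp [h] <;> ring

end StmtAux

/-! ### Matrix / Pucci lemmas -/

section MatrixAux
variable {n : ℕ}

lemma isHermitian_of_real {A : Matrix (Fin n) (Fin n) ℝ} (h : ∀ i j, A i j = A j i) :
    A.IsHermitian := by
  ext i j
  simp [Matrix.conjTranspose_apply, h i j]

lemma quad_vecMulVec (w t : Fin n → ℝ) :
    t ⬝ᵥ ((Matrix.vecMulVec w w) *ᵥ t) = (w ⬝ᵥ t)^2 := by
  simp only [dotProduct, Matrix.mulVec, Matrix.vecMulVec_apply, sq,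
    Finset.sum_mul, Finset.mul_sum]
  rw [Finset.sum_comm]
  exact Finset.sum_congr rfl fun i _ => Finset.sum_congr rfl fun j _ => by ring

lemma trace_vecMulVec (w : Fin n → ℝ) : (Matrix.vecMulVec w w).trace = w ⬝ᵥ w := by
  simp [Matrix.trace, Matrix.vecMulVec_apply, dotProduct, Matrix.diag]

lemma trace_vecMulVec_mul (w x : Fin n → ℝ) :
    (Matrix.vecMulVec w w * Matrix.vecMulVec x x).trace = (w ⬝ᵥ x)^2 := by
  simp only [Matrix.trace, Matrix.diag, Matrix.mul_apply, Matrix.vecMulVec_apply,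
    dotProduct, sq, Finset.sum_mul, Finset.mul_sum]
  rw [Finset.sum_comm]
  exact Finset.sum_congr rfl fun i _ => Finset.sum_congr rfl fun j _ => by ring

lemma entry_bound {lam Lam : ℝ} (hlam : 0 < lam) (hle : lam ≤ Lam)
    {A : Matrix (Fin n) (Fin n) ℝ}
    (hB : (A - lam • (1 : Matrix (Fin n) (Fin n) ℝ)).PosSemidef)
    (hC : (Lam • (1 : Matrix (Fin n) (Fin n) ℝ) - A).PosSemidef)
    (i j : Fin n) : |A i j| ≤ Lam := by
  set B := A - lam • (1 : Matrix (Fin n) (Fin n) ℝ) with hBdef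
  have qB : ∀ t : Fin n → ℝ, 0 ≤ t ⬝ᵥ (B *ᵥ t) := fun t => by
    simpa using hB.dotProduct_mulVec_nonneg t
  have qC : ∀ t : Fin n → ℝ, 0 ≤ t ⬝ᵥ ((Lam • (1 : Matrix (Fin n) (Fin n) ℝ) - A) *ᵥ t) :=
    fun t => by simpa using hC.dotProduct_mulVec_nonneg t
  have hdiagB : ∀ k, 0 ≤ B k k := by
    intro k
    have := qB (Pi.single k 1)
    simpa [Matrix.mulVec_single, single_dotProduct] using this
  have hdiagC : ∀ k, A k k ≤ Lam := by
    intro k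
    have := qC (Pi.single k 1)
    simp [Matrix.mulVec_single, single_dotProduct, Matrix.sub_apply,
      Matrix.smul_apply, Matrix.one_apply] at this
    linarith
  have hBd : ∀ k, B k k ≤ Lam - lam := by
    intro k
    have := hdiagC k
    simp only [hBdef, Matrix.sub_apply, Matrix.smul_apply, Matrix.one_apply_eq, smul_eq_mul,
      mul_one]
    linarith
  by_cases h : i = j
  · subst h
    have h1 := hdiagB i
    have h2 := hdiagC i
    have : lam ≤ A i i := by
      have := hdiagB i
      simp only [hBdef, Matrix.sub_apply, Matrix.smul_apply, Matrix.one_apply_eq, smul_eq_mul,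
        mul_one] at this
      linarith
    rw [abs_le]; constructor <;> linarith
  · have hsymm : B j i = B i j := by
      have := hB.isHermitian.apply j i
      simpa using this.symm
    have hplus : 0 ≤ B i i + B j i + (B i j + B j j) := by
      have := qB ((Pi.single i 1 : Fin n → ℝ) + Pi.single j 1)
      simpa [Matrix.mulVec_add, Matrix.mulVec_single, add_dotProduct,
        single_dotProduct, dotProduct_add] using this
    have hminus : 0 ≤ B i i - B j i + (-(B i j) + B j j) := by
      have := qB ((Pi.single i 1 : Fin n → ℝ) - Pi.single j 1)
      have h2 : ((Pi.single i 1 : Fin n → ℝ) - Pi.single j 1) ⬝ᵥ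
          (B *ᵥ ((Pi.single i 1 : Fin n → ℝ) - Pi.single j 1))
          = B i i - B j i + (-(B i j) + B j j) := by
        simp [Matrix.mulVec_sub, Matrix.mulVec_single, sub_dotProduct,
          single_dotProduct, dotProduct_sub]
        ring
      rw [h2] at this; exact this
    have hBij : |B i j| ≤ Lam - lam := by
      have bi := hdiagB i; have bj := hdiagB j
      have bi' := hBd i; have bj' := hBd j
      rw [abs_le]; constructor <;> nlinarith [hsymm]
    have hAB : A i j = B i j := by
      simp [hBdef, Matrix.sub_apply, Matrix.smul_apply, Matrix.one_apply_ne h]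
    rw [hAB]
    calc |B i j| ≤ Lam - lam := hBij
      _ ≤ Lam := by linarith

lemma pucci_bddAbove (lam Lam : ℝ) (hlam : 0 < lam) (hle : lam ≤ Lam)
    (M : Matrix (Fin n) (Fin n) ℝ) :
    BddAbove {t : ℝ | ∃ A : Matrix (Fin n) (Fin n) ℝ, A.IsSymm ∧
      (A - lam • (1 : Matrix (Fin n) (Fin n) ℝ)).PosSemidef ∧
      (Lam • (1 : Matrix (Fin n) (Fin n) ℝ) - A).PosSemidef ∧
      t = -(A * M).trace} := by
  refine ⟨∑ i : Fin n, ∑ j : Fin n, Lam * |M j i|, ?_⟩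
  rintro t ⟨A, -, hB, hC, rfl⟩
  have hTr : (A * M).trace = ∑ i : Fin n, ∑ j : Fin n, A i j * M j i := by
    simp [Matrix.trace, Matrix.diag, Matrix.mul_apply]
  rw [hTr, ← Finset.sum_neg_distrib]
  refine Finset.sum_le_sum fun i _ => ?_
  rw [← Finset.sum_neg_distrib]
  refine Finset.sum_le_sum fun j _ => ?_
  calc -(A i j * M j i) ≤ |A i j * M j i| := neg_le_abs _
    _ = |A i j| * |M j i| := abs_mul _ _
    _ ≤ Lam * |M j i| := by
        exact mul_le_mul_of_nonneg_right (entry_bound hlam hle hB hC i j) (abs_nonneg _)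

lemma dp_self_nonneg (t : Fin n → ℝ) : 0 ≤ t ⬝ᵥ t :=
  Finset.sum_nonneg fun i _ => mul_self_nonneg _

lemma pucci_ge (lam Lam aa bb : ℝ) (hlam : 0 < lam) (hle : lam ≤ Lam)
    (w xv : Fin n → ℝ) (hS : 0 < w ⬝ᵥ w)
    (M : Matrix (Fin n) (Fin n) ℝ)
    (hM : M = aa • (1 : Matrix (Fin n) (Fin n) ℝ) + bb • Matrix.vecMulVec xv xv) :
    pucciSup lam Lam M ≥
      -(Lam*aa*(n:ℝ) + Lam*bb*(xv ⬝ᵥ xv)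
        + ((lam-Lam)/(w ⬝ᵥ w))*(aa*(w ⬝ᵥ w) + bb*(w ⬝ᵥ xv)^2)) := by
  set S := w ⬝ᵥ w with hSdef
  set c : ℝ := (lam - Lam)/S with hc
  set A : Matrix (Fin n) (Fin n) ℝ := Lam • 1 + c • Matrix.vecMulVec w w with hA
  have hc_nonpos : c ≤ 0 := div_nonpos_of_nonpos_of_nonneg (by linarith) hS.le
  have hherm : ∀ i j : Fin n, A i j = A j i := by
    intro i j
    simp only [hA, Matrix.add_apply, Matrix.smul_apply, Matrix.vecMulVec_apply, smul_eq_mul]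
    by_cases h : i = j
    · subst h; ring
    · rw [Matrix.one_apply_ne h, Matrix.one_apply_ne (Ne.symm h)]; ring
  have hsymm : A.IsSymm := by
    ext i j; exact hherm j i
  have quadA : ∀ t : Fin n → ℝ, t ⬝ᵥ (A *ᵥ t) = Lam * (t ⬝ᵥ t) + c * (w ⬝ᵥ t)^2 := by
    intro t
    simp only [hA, Matrix.add_mulVec, Matrix.smul_mulVec, Matrix.one_mulVec,
      dotProduct_add, dotProduct_smul, smul_eq_mul]
    rw [quad_vecMulVec]
  have hCS : ∀ t : Fin n → ℝ, (w ⬝ᵥ t)^2 ≤ S * (t ⬝ᵥ t) := by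
    intro t
    simpa [dotProduct, sq, hSdef] using
      Finset.sum_mul_sq_le_sq_mul_sq Finset.univ w t
  have hB : (A - lam • (1 : Matrix (Fin n) (Fin n) ℝ)).PosSemidef := by
    refine Matrix.PosSemidef.of_dotProduct_mulVec_nonneg ?_ ?_
    · apply isHermitian_of_real
      intro i j
      simp only [Matrix.sub_apply, Matrix.smul_apply, smul_eq_mul]
      rw [hherm i j]
      by_cases h : i = j
      · subst h; ring
      · rw [Matrix.one_apply_ne h, Matrix.one_apply_ne (Ne.symm h)]
    · intro t
      have expand : (A - lam • (1 : Matrix (Fin n) (Fin n) ℝ)) *ᵥ t = A *ᵥ t - lam • t := by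
        rw [Matrix.sub_mulVec, Matrix.smul_mulVec, Matrix.one_mulVec]
      simp only [star_trivial, expand, dotProduct_sub, dotProduct_smul,
        smul_eq_mul, quadA]
      have h1 : c * (w ⬝ᵥ t)^2 ≥ (lam - Lam) * (t ⬝ᵥ t) := by
        rcases eq_or_lt_of_le (sq_nonneg (w ⬝ᵥ t)) with h | h
        · nlinarith [dp_self_nonneg t, hCS t]
        · have := hCS t
          rw [hc]
          rw [ge_iff_le, div_mul_eq_mul_div, le_div_iff₀ hS]
          nlinarith
      nlinarith [dp_self_nonneg t]
  have hC : (Lam • (1 : Matrix (Fin n) (Fin n) ℝ) - A).PosSemidef := by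
    refine Matrix.PosSemidef.of_dotProduct_mulVec_nonneg ?_ ?_
    · apply isHermitian_of_real
      intro i j
      simp only [Matrix.sub_apply, Matrix.smul_apply, smul_eq_mul]
      rw [hherm i j]
      by_cases h : i = j
      · subst h; ring
      · rw [Matrix.one_apply_ne h, Matrix.one_apply_ne (Ne.symm h)]
    · intro t
      have expand : (Lam • (1 : Matrix (Fin n) (Fin n) ℝ) - A) *ᵥ t = Lam • t - A *ᵥ t := by
        rw [Matrix.sub_mulVec, Matrix.smul_mulVec, Matrix.one_mulVec]
      simp only [star_trivial, expand, dotProduct_sub, dotProduct_smul,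
        smul_eq_mul, quadA]
      nlinarith [sq_nonneg (w ⬝ᵥ t)]
  have htr : (A * M).trace
      = Lam*aa*(n:ℝ) + Lam*bb*(xv ⬝ᵥ xv) + c*(aa*S + bb*(w ⬝ᵥ xv)^2) := by
    have expand : A * M = (Lam*aa) • (1 : Matrix (Fin n) (Fin n) ℝ)
        + (Lam*bb) • Matrix.vecMulVec xv xv
        + ((c*aa) • Matrix.vecMulVec w w
          + (c*bb) • (Matrix.vecMulVec w w * Matrix.vecMulVec xv xv)) := by
      rw [hA, hM]
      simp only [Matrix.add_mul, Matrix.mul_add, Matrix.smul_mul, Matrix.mul_smul,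
        Matrix.one_mul, Matrix.mul_one, smul_smul, smul_add]
      module
    rw [expand]
    simp only [Matrix.trace_add, Matrix.trace_smul, Matrix.trace_one,
      _root_.trace_vecMulVec, trace_vecMulVec_mul, smul_eq_mul, ← hSdef, Fintype.card_fin]
    ring
  have hmem : -(A * M).trace ∈ {t : ℝ | ∃ A : Matrix (Fin n) (Fin n) ℝ, A.IsSymm ∧
      (A - lam • (1 : Matrix (Fin n) (Fin n) ℝ)).PosSemidef ∧
      (Lam • (1 : Matrix (Fin n) (Fin n) ℝ) - A).PosSemidef ∧
      t = -(A * M).trace} := ⟨A, hsymm, hB, hC, rfl⟩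
  have hle2 := le_csSup (pucci_bddAbove lam Lam hlam hle M) hmem
  rw [htr] at hle2
  calc -(Lam*aa*(n:ℝ) + Lam*bb*(xv ⬝ᵥ xv) + ((lam-Lam)/(w ⬝ᵥ w))*(aa*(w ⬝ᵥ w) + bb*(w ⬝ᵥ xv)^2))
      = -(Lam*aa*(n:ℝ) + Lam*bb*(xv ⬝ᵥ xv) + c*(aa*S + bb*(w ⬝ᵥ xv)^2)) := by
        rw [hc, hSdef]
    _ ≤ pucciSup lam Lam M := hle2

end MatrixAux

lemma key_aux {β δ m u : ℝ} (h1 : m ≤ β) (h2 : m ≤ β - δ - 2) (hu : 0 ≤ u) :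
    m * (1+u) ≤ β * (1+u) - (δ+2) * u := by nlinarith

lemma exp_aux1 {δ q : ℝ} (h : 2 < δ * (q-1)) : -(δ/2)*q ≤ -(δ/2)-1 := by nlinarith

lemma exp_aux2 {δ γ : ℝ} (h : 2 - γ < δ * (γ-1)) :
    (-(δ/2) - 1) * γ + (1/2 : ℝ) * γ ≤ -(δ/2) - 1 := by nlinarith

/-- for `q > β/(β−2)`, `γ > β/(β−1)` and any
`max{2/(q−1), (2−γ)/(γ−1)} < δ < β−2`, for `K_δ > 0` small enough the function
`v(x) = K_δ(1+|x|²)^{-δ/2}` satisfies `M⁺_{λ,Λ}(D²v) ≥ v^q + |Dv|^γ` in `ℝ^N`. -/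
theorem stmt9 {N : ℕ} (hN : 3 ≤ N) (lam Lam β q γ δ : ℝ) (hlam : 0 < lam) (hle : lam ≤ Lam)
    (hβ : β = Lam / lam * (N - 1) + 1) (hβ2 : 2 < β)
    (hq : q > β / (β - 2)) (hγ : γ > β / (β - 1))
    (hδl : max (2 / (q - 1)) ((2 - γ) / (γ - 1)) < δ) (hδu : δ < β - 2) :
    ∃ K₀ : ℝ, 0 < K₀ ∧ ∀ K : ℝ, 0 < K → K ≤ K₀ →
      ∀ v : EuclideanSpace ℝ (Fin N) → ℝ,
        (∀ x : EuclideanSpace ℝ (Fin N), v x = K * (1 + ‖x‖ ^ 2) ^ (-(δ / 2))) →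
        ∀ x : EuclideanSpace ℝ (Fin N),
          pucciSup lam Lam (hess v x) ≥ v x ^ q + ‖gradient v x‖ ^ γ := by
  have hβ0 : (0:ℝ) < β := by linarith
  have hβ2' : (0:ℝ) < β - 2 := by linarith
  have hq1 : 1 < q := by
    have : (1:ℝ) < β / (β - 2) := (one_lt_div hβ2').mpr (by linarith)
    linarith
  have hγ1 : 1 < γ := by
    have : (1:ℝ) < β / (β - 1) := (one_lt_div (by linarith)).mpr (by linarith)
    linarith
  have hδq : 2 < δ * (q - 1) := by
    have h := lt_of_le_of_lt (le_max_left (2 / (q - 1)) ((2 - γ) / (γ - 1))) hδl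
    rw [div_lt_iff₀ (by linarith)] at h
    nlinarith
  have hδγ : 2 - γ < δ * (γ - 1) := by
    have h := lt_of_le_of_lt (le_max_right (2 / (q - 1)) ((2 - γ) / (γ - 1))) hδl
    rw [div_lt_iff₀ (by linarith)] at h
    nlinarith
  have hδ0 : 0 < δ := by
    have h0 : (0:ℝ) < 2 / (q - 1) := div_pos two_pos (by linarith)
    have := lt_of_le_of_lt (le_max_left (2 / (q - 1)) ((2 - γ) / (γ - 1))) hδl
    linarith
  set m : ℝ := min β (β - δ - 2) with hm
  have hm0 : 0 < m := lt_min hβ0 (by linarith)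
  set c : ℝ := lam * δ * m with hcdef
  have hc0 : 0 < c := by positivity
  have hδγ0 : (0:ℝ) < δ ^ γ := Real.rpow_pos_of_pos hδ0 γ
  set K₀ : ℝ := min 1 (min ((c/2) ^ ((1:ℝ)/(q-1))) ((c/(2 * δ ^ γ)) ^ ((1:ℝ)/(γ-1)))) with hK₀
  have hK₀0 : 0 < K₀ := by
    apply lt_min one_pos
    apply lt_min
    · exact Real.rpow_pos_of_pos (by positivity) _
    · exact Real.rpow_pos_of_pos (by positivity) _
  refine ⟨K₀, hK₀0, ?_⟩
  intro K hK hKK v hv x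
  have hveq : v = fun y : EuclideanSpace ℝ (Fin N) => K * (1 + ‖y‖ ^ 2) ^ (-(δ/2)) :=
    funext hv
  subst hveq
  -- bounds on K
  have hKq : K ^ (q - 1) ≤ c / 2 := by
    have h1 : K ≤ (c/2) ^ ((1:ℝ)/(q-1)) :=
      le_trans hKK (le_trans (min_le_right _ _) (min_le_left _ _))
    calc K ^ (q-1) ≤ ((c/2) ^ ((1:ℝ)/(q-1))) ^ (q-1) :=
          Real.rpow_le_rpow hK.le h1 (by linarith)
      _ = (c/2) ^ (((1:ℝ)/(q-1)) * (q-1)) := (Real.rpow_mul (by positivity) _ _).symm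
      _ = c/2 := by
          rw [one_div_mul_cancel (by intro h; exact absurd h (by linarith) : q - 1 ≠ 0),
            Real.rpow_one]
  have hKγ : δ ^ γ * K ^ (γ - 1) ≤ c / 2 := by
    have h1 : K ≤ (c/(2 * δ ^ γ)) ^ ((1:ℝ)/(γ-1)) :=
      le_trans hKK (le_trans (min_le_right _ _) (min_le_right _ _))
    have h2 : K ^ (γ-1) ≤ c/(2 * δ ^ γ) := by
      calc K ^ (γ-1) ≤ ((c/(2 * δ ^ γ)) ^ ((1:ℝ)/(γ-1))) ^ (γ-1) :=
            Real.rpow_le_rpow hK.le h1 (by linarith)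
        _ = (c/(2 * δ ^ γ)) ^ (((1:ℝ)/(γ-1)) * (γ-1)) :=
            (Real.rpow_mul (by positivity) _ _).symm
        _ = c/(2 * δ ^ γ) := by
            rw [one_div_mul_cancel (by intro h; exact absurd h (by linarith) : γ - 1 ≠ 0),
              Real.rpow_one]
    calc δ ^ γ * K ^ (γ-1) ≤ δ ^ γ * (c/(2 * δ ^ γ)) :=
          mul_le_mul_of_nonneg_left h2 hδγ0.le
      _ = c/2 := by field_simp
  -- pointwise setup
  set u : ℝ := ‖x‖ ^ 2 with hu
  have hu0 : 0 ≤ u := by positivity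
  have h1u : (0:ℝ) < 1 + u := by positivity
  set P1 : ℝ := (1+u) ^ (-(δ/2) - 1) with hP1def
  set P2 : ℝ := (1+u) ^ (-(δ/2) - 2) with hP2def
  set W : ℝ := (1+u) ^ (-(δ/2)) with hWdef
  have hP1 : 0 < P1 := Real.rpow_pos_of_pos h1u _
  have hP2 : 0 < P2 := Real.rpow_pos_of_pos h1u _
  have hW : 0 < W := Real.rpow_pos_of_pos h1u _
  have hP1P2 : P1 = P2 * (1+u) := by
    rw [hP1def, hP2def, show (-(δ/2) - 1 : ℝ) = (-(δ/2) - 2) + 1 by ring,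
      Real.rpow_add_one h1u.ne']
  set xv : Fin N → ℝ := fun i => x i with hxv
  have hUdot : xv ⬝ᵥ xv = u := by
    rw [hu, ← real_inner_self_eq_norm_sq]
    simp [PiLp.inner_apply, RCLike.inner_apply, dotProduct, hxv]
    rw [EuclideanSpace.real_norm_sq_eq]; simp [sq]
  have hlamβ : lam * β = Lam * ((N:ℝ)-1) + lam := by
    rw [hβ]
    field_simp
  have ha1 : a1 K δ u = -(K*δ) * P1 := by rw [hP1def]; rfl
  have hb1 : b1 K δ u = K*δ*(δ+2) * P2 := by rw [hP2def]; rfl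
  have hhess : hess (fun y : EuclideanSpace ℝ (Fin N) => K * (1 + ‖y‖ ^ 2) ^ (-(δ/2))) x
      = a1 K δ u • (1 : Matrix (Fin N) (Fin N) ℝ) + b1 K δ u • Matrix.vecMulVec xv xv :=
    hess_v_eq K δ x
  -- Pucci lower bound
  have hpucci : pucciSup lam Lam
      (hess (fun y : EuclideanSpace ℝ (Fin N) => K * (1 + ‖y‖ ^ 2) ^ (-(δ/2))) x)
      ≥ lam * (K*δ) * (β * P1 - (δ+2) * P2 * u) := by
    by_cases hx0 : x = 0
    · have hNpos : 0 < N := by omega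
      have hxv0 : xv = 0 := by
        funext i
        rw [hxv, hx0]
        rfl
      have hu00 : u = 0 := by rw [← hUdot, hxv0]; simp [dotProduct]
      set w : Fin N → ℝ := Pi.single (⟨0, hNpos⟩ : Fin N) 1 with hw
      have hww : w ⬝ᵥ w = 1 := by
        rw [hw]; simp [single_dotProduct]
      have hwxv : w ⬝ᵥ xv = 0 := by rw [hxv0]; simp [dotProduct]
      have hS : 0 < w ⬝ᵥ w := by rw [hww]; norm_num
      have h := pucci_ge lam Lam (a1 K δ u) (b1 K δ u) hlam hle w xv hS _ hhess
      have e : -(Lam*(a1 K δ u)*(N:ℝ) + Lam*(b1 K δ u)*(xv ⬝ᵥ xv)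
            + ((lam-Lam)/(w ⬝ᵥ w))*((a1 K δ u)*(w ⬝ᵥ w) + (b1 K δ u)*(w ⬝ᵥ xv)^2))
          = lam * (K*δ) * (β * P1 - (δ+2) * P2 * u) := by
        rw [hww, hwxv, hUdot, ha1, hb1, hu00]
        linear_combination (-(K*δ*P1)) * hlamβ
      exact le_trans (le_of_eq e.symm) h
    · have hS : 0 < xv ⬝ᵥ xv := by
        rw [hUdot, hu]
        have : 0 < ‖x‖ := norm_pos_iff.mpr hx0
        positivity
      have hu0' : 0 < u := by rw [← hUdot]; exact hS
      have h := pucci_ge lam Lam (a1 K δ u) (b1 K δ u) hlam hle xv xv hS _ hhess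
      have e : -(Lam*(a1 K δ u)*(N:ℝ) + Lam*(b1 K δ u)*(xv ⬝ᵥ xv)
            + ((lam-Lam)/(xv ⬝ᵥ xv))*((a1 K δ u)*(xv ⬝ᵥ xv) + (b1 K δ u)*(xv ⬝ᵥ xv)^2))
          = lam * (K*δ) * (β * P1 - (δ+2) * P2 * u) := by
        rw [hUdot, ha1, hb1]
        have hdiv : ((lam - Lam)/u) * ((-(K*δ) * P1) * u + (K*δ*(δ+2) * P2) * u ^ 2)
            = (lam - Lam) * ((-(K*δ) * P1) + (K*δ*(δ+2) * P2) * u) := by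
          field_simp
        rw [hdiv]
        linear_combination (-(K*δ*P1)) * hlamβ
      exact le_trans (le_of_eq e.symm) h
  -- lower bound simplification
  have hlower : lam * (K*δ) * (β * P1 - (δ+2) * P2 * u) ≥ c * K * P1 := by
    have hmβ : m ≤ β := min_le_left _ _
    have hmδ : m ≤ β - δ - 2 := min_le_right _ _
    have key : m * (1+u) ≤ β * (1+u) - (δ+2) * u := key_aux hmβ hmδ hu0
    have h2 : lam * (K*δ) * (β * P1 - (δ+2) * P2 * u)
        = lam * K * δ * P2 * (β * (1+u) - (δ+2) * u) := by
      rw [hP1P2]; ring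
    have h3 : c * K * P1 = lam * K * δ * P2 * (m * (1+u)) := by
      rw [hP1P2, hcdef]; ring
    rw [ge_iff_le, h2, h3]
    exact mul_le_mul_of_nonneg_left key (by positivity)
  -- upper bound for v^q
  have hvx : (fun y : EuclideanSpace ℝ (Fin N) => K * (1 + ‖y‖ ^ 2) ^ (-(δ/2))) x = K * W := by
    rw [hWdef, hu]
  have hterm1 : (K * W) ^ q ≤ (c/2) * K * P1 := by
    have hWq : W ^ q ≤ P1 := by
      rw [hWdef, hP1def, ← Real.rpow_mul h1u.le]
      exact Real.rpow_le_rpow_of_exponent_le (by linarith) (exp_aux1 hδq)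
    have hKq' : K ^ q = K ^ (q-1) * K := by
      rw [show q = (q-1) + 1 by ring, Real.rpow_add hK, Real.rpow_one]; ring_nf
    calc (K * W) ^ q = K ^ q * W ^ q := Real.mul_rpow hK.le hW.le
      _ ≤ K ^ q * P1 := mul_le_mul_of_nonneg_left hWq (Real.rpow_nonneg hK.le _)
      _ = K ^ (q-1) * K * P1 := by rw [hKq']
      _ ≤ (c/2) * K * P1 := by
          apply mul_le_mul_of_nonneg_right _ hP1.le
          exact mul_le_mul_of_nonneg_right hKq hK.le
  -- gradient norm
  have hgrad : ‖gradient (fun y : EuclideanSpace ℝ (Fin N) => K * (1 + ‖y‖ ^ 2) ^ (-(δ/2))) x‖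
      = K * δ * P1 * ‖x‖ := by
    rw [gradient_v K δ x, norm_smul]
    rw [ha1, Real.norm_eq_abs, abs_mul, abs_neg, abs_of_nonneg (by positivity : (0:ℝ) ≤ K*δ),
      abs_of_nonneg hP1.le]
  -- upper bound for the gradient term
  have hterm2 : (K * δ * P1 * ‖x‖) ^ γ ≤ (c/2) * K * P1 := by
    have hxn : ‖x‖ ≤ (1+u) ^ ((1:ℝ)/2) := by
      have h1 : ‖x‖ = Real.sqrt u := by rw [hu, Real.sqrt_sq (norm_nonneg x)]
      have h2 : Real.sqrt u ≤ Real.sqrt (1+u) := Real.sqrt_le_sqrt (by linarith)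
      rw [h1, ← Real.sqrt_eq_rpow]
      exact h2
    have hxγ : ‖x‖ ^ γ ≤ (1+u) ^ (((1:ℝ)/2) * γ) := by
      calc ‖x‖ ^ γ ≤ ((1+u) ^ ((1:ℝ)/2)) ^ γ :=
            Real.rpow_le_rpow (norm_nonneg x) hxn (by linarith)
        _ = (1+u) ^ (((1:ℝ)/2) * γ) := (Real.rpow_mul h1u.le _ _).symm
    have hP1γ : P1 ^ γ = (1+u) ^ ((-(δ/2) - 1) * γ) := by
      rw [hP1def]; exact (Real.rpow_mul h1u.le _ _).symm
    have hcomb : P1 ^ γ * ‖x‖ ^ γ ≤ P1 := by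
      calc P1 ^ γ * ‖x‖ ^ γ ≤ (1+u) ^ ((-(δ/2) - 1) * γ) * (1+u) ^ (((1:ℝ)/2) * γ) := by
            rw [hP1γ]
            exact mul_le_mul_of_nonneg_left hxγ (Real.rpow_nonneg h1u.le _)
        _ = (1+u) ^ ((-(δ/2) - 1) * γ + ((1:ℝ)/2) * γ) := (Real.rpow_add h1u _ _).symm
        _ ≤ P1 := by
            rw [hP1def]
            exact Real.rpow_le_rpow_of_exponent_le (by linarith)
              (by have := exp_aux2 hδγ; linarith)
    have hKγ' : K ^ γ = K ^ (γ-1) * K := by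
      rw [show γ = (γ-1) + 1 by ring, Real.rpow_add hK, Real.rpow_one]; ring_nf
    have hexp : (K * δ * P1 * ‖x‖) ^ γ = K ^ γ * δ ^ γ * (P1 ^ γ * ‖x‖ ^ γ) := by
      rw [show K * δ * P1 * ‖x‖ = (K * δ) * (P1 * ‖x‖) by ring,
        Real.mul_rpow (by positivity) (by positivity),
        Real.mul_rpow hK.le hδ0.le, Real.mul_rpow hP1.le (norm_nonneg x)]
    calc (K * δ * P1 * ‖x‖) ^ γ = K ^ γ * δ ^ γ * (P1 ^ γ * ‖x‖ ^ γ) := hexp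
      _ ≤ K ^ γ * δ ^ γ * P1 := by
          apply mul_le_mul_of_nonneg_left hcomb (by positivity)
      _ = (δ ^ γ * K ^ (γ-1)) * K * P1 := by rw [hKγ']; ring
      _ ≤ (c/2) * K * P1 := by
          apply mul_le_mul_of_nonneg_right _ hP1.le
          exact mul_le_mul_of_nonneg_right hKγ hK.le
  -- conclusion
  rw [ge_iff_le, hvx, hgrad]
  calc (K * W) ^ q + (K * δ * P1 * ‖x‖) ^ γ
      ≤ (c/2) * K * P1 + (c/2) * K * P1 := add_le_add hterm1 hterm2
    _ = c * K * P1 := by ring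
    _ ≤ lam * (K*δ) * (β * P1 - (δ+2) * P2 * u) := hlower
    _ ≤ pucciSup lam Lam
        (hess (fun y : EuclideanSpace ℝ (Fin N) => K * (1 + ‖y‖ ^ 2) ^ (-(δ/2))) x) := hpucci
end
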